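/- arXiv:2506.15968 — 6 statements merged into one kernel-verified Lean document; each statement's English description precedes it below -/
import Mathlib

section
/- Let α > 0, 0 < q < 1, and let u : [t0, ∞) → ℝ be a continuously differentiable function. Suppose there exists a constant L ∈ ℝ such that lim_{t→∞} [(α − q t^{q−1}) u(t) + t^q u'(t)] = L. Then lim_{t→∞} u(t) = L/α. -/
open Filter Set
open scoped Topology

/-- Let `α > 0`, `0 < q < 1`, and let `u : [t0, ∞) → ℝ` be continuously
differentiable. If `(α − q t^(q−1)) u(t) + t^q u'(t) → L` as `t → ∞`,
then `u(t) → L / α` as `t → ∞`. -/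
theorem tendsto_of_combination_tendsto
    (t0 : ℝ) (ht0 : 0 < t0) (α q L : ℝ) (hα : 0 < α) (hq0 : 0 < q) (hq1 : q < 1)
    (u u' : ℝ → ℝ)
    (hderiv : ∀ t ∈ Set.Ici t0, HasDerivWithinAt u (u' t) (Set.Ici t0) t)
    (hcont : ContinuousOn u' (Set.Ici t0))
    (hlim : Tendsto (fun t : ℝ => (α - q * t ^ (q - 1)) * u t + t ^ q * u' t)
      atTop (𝓝 L)) :
    Tendsto u atTop (𝓝 (L / α)) := by
  have h1q : (0:ℝ) < 1 - q := by linarith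
  set c : ℝ := α / (1 - q) with hc_def
  have hc : 0 < c := div_pos hα h1q
  set D : ℝ → ℝ := fun t => t ^ (-q) * Real.exp (c * t ^ (1 - q)) with hD_def
  set M : ℝ → ℝ := fun t => D t * (u t - L / α) with hM_def
  set h : ℝ → ℝ := fun t =>
    ((α - q * t ^ (q - 1)) * u t + t ^ q * u' t) - (L / α) * (α - q * t ^ (q - 1)) with hh_def
  have hDpos : ∀ t : ℝ, 0 < t → 0 < D t := fun t ht =>
    mul_pos (Real.rpow_pos_of_pos ht _) (Real.exp_pos _)
  -- derivative of D
  have hDderiv : ∀ t : ℝ, 0 < t →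
      HasDerivAt D (t ^ (-q) * t ^ (-q) * Real.exp (c * t ^ (1 - q))
        * (α - q * t ^ (q - 1))) t := by
    intro t ht
    have h1 : HasDerivAt (fun t : ℝ => t ^ (-q)) (-q * t ^ (-q - 1)) t :=
      Real.hasDerivAt_rpow_const (Or.inl ht.ne')
    have h2 : HasDerivAt (fun t : ℝ => t ^ (1 - q)) ((1 - q) * t ^ (1 - q - 1)) t :=
      Real.hasDerivAt_rpow_const (Or.inl ht.ne')
    have h3 : HasDerivAt (fun t : ℝ => Real.exp (c * t ^ (1 - q)))
        (Real.exp (c * t ^ (1 - q)) * (c * ((1 - q) * t ^ (1 - q - 1)))) t :=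
      (h2.const_mul c).exp
    have h4 := h1.mul h3
    convert h4 using 1
    case e'_4 => rfl
    case e'_5 => rfl
    case e'_8 => rfl
    have e1 : t ^ (1 - q - 1) = t ^ (-q) := by congr 1; ring
    have e2 : t ^ (-q - 1) = t ^ (-q) * t ^ (-q) * t ^ (q - 1) := by
      rw [← Real.rpow_add ht, ← Real.rpow_add ht]; congr 1; ring
    rw [e1, e2, hc_def]
    field_simp
    ring
  -- derivative of M
  have hMderiv : ∀ t : ℝ, t0 < t →
      HasDerivAt M (t ^ (-q) * t ^ (-q) * Real.exp (c * t ^ (1 - q)) * h t) t := by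
    intro t ht
    have htpos : 0 < t := lt_trans ht0 ht
    have hu : HasDerivAt u (u' t) t :=
      (hderiv t (le_of_lt ht)).hasDerivAt (Ici_mem_nhds ht)
    have h4 := (hDderiv t htpos).mul (hu.sub_const (L / α))
    convert h4 using 1
    case e'_4 => rfl
    case e'_5 => rfl
    case e'_8 => rfl
    have key : t ^ q * t ^ (-q) = 1 := by
      rw [← Real.rpow_add htpos]; norm_num
    simp only [hh_def, hD_def]
    linear_combination (t ^ (-q) * Real.exp (c * t ^ (1 - q)) * u' t) * key
  -- tendsto facts
  have hB : Tendsto (fun t : ℝ => t ^ (q - 1)) atTop (𝓝 0) := by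
    refine (tendsto_rpow_neg_atTop h1q).congr fun x => by congr 1; ring
  have hh0 : Tendsto h atTop (𝓝 0) := by
    have h5 : Tendsto (fun t : ℝ => (L / α) * (α - q * t ^ (q - 1))) atTop
        (𝓝 ((L / α) * (α - q * 0))) := ((hB.const_mul q).const_sub α).const_mul (L / α)
    have h6 := hlim.sub h5
    have : L - L / α * (α - q * 0) = 0 := by field_simp; ring
    rwa [this] at h6
  have hDtop : Tendsto D atTop atTop := by
    have h7 := (tendsto_exp_mul_div_rpow_atTop (q / (1 - q)) c hc).comp
      (tendsto_rpow_atTop h1q)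
    refine h7.congr' ?_
    filter_upwards [eventually_gt_atTop (0:ℝ)] with t ht
    show Real.exp (c * t ^ (1 - q)) / (t ^ (1 - q)) ^ (q / (1 - q)) = D t
    rw [← Real.rpow_mul ht.le]
    have e9 : (1 - q) * (q / (1 - q)) = q := by field_simp
    rw [e9]
    show Real.exp (c * t ^ (1 - q)) / t ^ q = t ^ (-q) * Real.exp (c * t ^ (1 - q))
    rw [Real.rpow_neg ht.le, div_eq_mul_inv, mul_comm]
  -- main epsilon argument
  rw [Metric.tendsto_atTop]
  intro ε hε
  -- choose T
  have e1 : ∀ᶠ t : ℝ in atTop, q * t ^ (q - 1) < α / 2 := by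
    have := hB.const_mul q
    rw [mul_zero] at this
    exact this.eventually_lt_const (by linarith)
  have e2 : ∀ᶠ t : ℝ in atTop, |h t| < ε * α / 4 := by
    have : Tendsto (fun t => |h t|) atTop (𝓝 |0|) := hh0.abs
    rw [abs_zero] at this
    exact this.eventually_lt_const (by nlinarith [mul_pos hε hα])
  obtain ⟨T, hT⟩ := eventually_atTop.1 ((e1.and e2).and (eventually_gt_atTop t0))
  have hTt0 : t0 < T := (hT T le_rfl).2
  have hTpos : 0 < T := lt_trans ht0 hTt0
  -- monotonicity setup
  have hcontD : ContinuousOn D (Ici T) := fun t ht =>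
    ((hDderiv t (lt_of_lt_of_le hTpos ht)).continuousAt).continuousWithinAt
  have hcontu : ContinuousOn u (Ici t0) := fun t ht => (hderiv t ht).continuousWithinAt
  have hcontM : ContinuousOn M (Ici T) := by
    refine hcontD.mul ((hcontu.mono (Ici_subset_Ici.2 hTt0.le)).sub continuousOn_const)
  have mono : ∀ s : ℝ, s = 1 ∨ s = -1 → MonotoneOn (fun t => ε / 2 * D t + s * M t) (Ici T) := by
    intro s hs
    refine monotoneOn_of_deriv_nonneg (convex_Ici T)
      ((continuousOn_const.mul hcontD).add (continuousOn_const.mul hcontM)) ?_ ?_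
    · intro x hx
      rw [interior_Ici] at hx
      have hx0 : t0 < x := lt_trans hTt0 hx
      exact (((hDderiv x (lt_trans ht0 hx0)).const_mul (ε/2)).add
        ((hMderiv x hx0).const_mul s)).differentiableAt.differentiableWithinAt
    · intro x hx
      rw [interior_Ici] at hx
      have hx0 : t0 < x := lt_trans hTt0 hx
      have hd := (((hDderiv x (lt_trans ht0 hx0)).const_mul (ε/2)).add
        ((hMderiv x hx0).const_mul s))
      rw [show deriv (fun t => ε / 2 * D t + s * M t) x = _ from hd.deriv]
      have hxpos : 0 < x := lt_trans ht0 hx0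
      have hP : 0 < x ^ (-q) * x ^ (-q) * Real.exp (c * x ^ (1 - q)) :=
        mul_pos (mul_pos (Real.rpow_pos_of_pos hxpos _) (Real.rpow_pos_of_pos hxpos _))
          (Real.exp_pos _)
      obtain ⟨⟨hx1, hx2⟩, _⟩ := hT x (le_of_lt hx)
      have hx3 := abs_le.1 hx2.le
      set P := x ^ (-q) * x ^ (-q) * Real.exp (c * x ^ (1 - q))
      have k1 : 0 ≤ P * ((α - q * x ^ (q - 1)) - α / 2) :=
        mul_nonneg hP.le (by linarith)
      have k2 : 0 ≤ P * (ε * α / 4 + s * h x) := by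
        refine mul_nonneg hP.le ?_
        rcases hs with rfl | rfl
        · linarith [hx3.1]
        · linarith [hx3.2]
      rcases hs with rfl | rfl <;> nlinarith [hP, hε, hα]
  -- consequence of monotonicity
  have bound : ∀ t ≥ T, |u t - L / α| ≤ |M T| / D t + ε / 2 := by
    intro t ht
    have htpos : 0 < t := lt_of_lt_of_le hTpos ht
    have hDt := hDpos t htpos
    have hDT := hDpos T hTpos
    have m1 := mono 1 (Or.inl rfl) self_mem_Ici ht ht
    have m2 := mono (-1) (Or.inr rfl) self_mem_Ici ht ht
    simp only [one_mul, neg_one_mul] at m1 m2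
    have hMt : |M t| ≤ |M T| + ε / 2 * D t := by
      have hεDT : 0 ≤ ε / 2 * D T := mul_nonneg (by linarith) hDT.le
      rw [abs_le]
      constructor
      · linarith [neg_abs_le (M T)]
      · linarith [le_abs_self (M T)]
    have hut : u t - L / α = M t / D t := by
      simp only [hM_def]
      field_simp
    rw [hut, abs_div, abs_of_pos hDt, div_add' _ _ _ hDt.ne']
    exact (div_le_div_iff_of_pos_right hDt).2 hMt
  obtain ⟨N, hN⟩ := eventually_atTop.1 (hDtop.eventually_gt_atTop (2 * |M T| / ε))
  refine ⟨max N T, fun t ht => ?_⟩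
  have ht1 : N ≤ t := le_trans (le_max_left _ _) ht
  have ht2 : T ≤ t := le_trans (le_max_right _ _) ht
  have hb := bound t ht2
  have hDgt := hN t ht1
  have hDt := hDpos t (lt_of_lt_of_le hTpos ht2)
  rw [Real.dist_eq]
  have hfin : |M T| / D t < ε / 2 := by
    rw [div_lt_iff₀ hDt]
    have h9 : 2 * |M T| / ε < D t := hDgt
    rw [div_lt_iff₀ hε] at h9
    nlinarith
  linarith
end

section
/- Let S be a nonempty subset of a real Hilbert space X and let x : [t0, ∞) → X be a curve. Assume: (i) for every z ∈ S the limit lim_{t→∞} ‖x(t) − z‖ exists; (ii) every weak sequential limit point of x(t) as t → ∞ (i.e., every weak limit of a sequence x(t_n) with t_n → ∞) belongs to S. Then x(t) converges weakly to an element of S as t → ∞. -/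
open Filter Set
open scoped Topology RealInnerProductSpace


lemma weak_seq_compact {X : Type*} [NormedAddCommGroup X] [InnerProductSpace ℝ X]
    [CompleteSpace X] (u : ℕ → X) (C : ℝ) (hC : ∀ n, ‖u n‖ ≤ C) :
    ∃ (w : X) (φ : ℕ → ℕ), StrictMono φ ∧
      ∀ y : X, Tendsto (fun n => ⟪u (φ n), y⟫) atTop (𝓝 ⟪w, y⟫) := by
  have hC0 : 0 ≤ C := le_trans (norm_nonneg _) (hC 0)
  -- diagonal extraction via compact metrizable product
  have hmem : ∀ n m, ⟪u n, u m⟫ ∈ Icc (-(C*C)) (C*C) := by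
    intro n m
    have h := abs_real_inner_le_norm (u n) (u m)
    have : |⟪u n, u m⟫| ≤ C * C :=
      h.trans (mul_le_mul (hC n) (hC m) (norm_nonneg _) hC0)
    exact abs_le.mp this
  set v : ℕ → (ℕ → Icc (-(C*C)) (C*C)) := fun n m => ⟨⟪u n, u m⟫, hmem n m⟩ with hv
  obtain ⟨L, -, φ, hφ, hL⟩ := IsCompact.tendsto_subseq (x := v) isCompact_univ
    (fun n => mem_univ _)
  have hL' : ∀ m, Tendsto (fun n => ⟪u (φ n), u m⟫) atTop (𝓝 (L m)) := by
    intro m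
    have := (tendsto_pi_nhds.mp hL) m
    exact (continuous_subtype_val.tendsto _).comp this
  -- the set of y where the inner products converge
  set A : Set X := {y : X | ∃ l : ℝ, Tendsto (fun n => ⟪u (φ n), y⟫) atTop (𝓝 l)} with hA
  have hA_add : ∀ y z, y ∈ A → z ∈ A → y + z ∈ A := by
    rintro y z ⟨l1, h1⟩ ⟨l2, h2⟩
    exact ⟨l1 + l2, by simpa [inner_add_right] using h1.add h2⟩
  have hA_smul : ∀ (c : ℝ) y, y ∈ A → c • y ∈ A := by
    rintro c y ⟨l, h⟩
    exact ⟨c * l, by simpa [inner_smul_right] using h.const_mul c⟩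
  have hA_span : (Submodule.span ℝ (Set.range u) : Set X) ⊆ A := by
    intro y hy
    induction hy using Submodule.span_induction with
    | mem y hy => obtain ⟨m, rfl⟩ := hy; exact ⟨L m, hL' m⟩
    | zero => exact ⟨0, by simpa using tendsto_const_nhds⟩
    | add y z _ _ hy hz => exact hA_add y z hy hz
    | smul c y _ hy => exact hA_smul c y hy
  have hA_closed : closure (Submodule.span ℝ (Set.range u) : Set X) ⊆ A := by
    intro y hy
    -- Cauchy criterion
    have hcs : CauchySeq (fun n => ⟪u (φ n), y⟫) := by
      rw [Metric.cauchySeq_iff]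
      intro ε hε
      obtain ⟨y', hy', hdy⟩ := Metric.mem_closure_iff.mp hy (ε / 4 / (C + 1))
        (by positivity)
      obtain ⟨l, hl⟩ := hA_span hy'
      have hcs' : CauchySeq (fun n => ⟪u (φ n), y'⟫) := hl.cauchySeq
      obtain ⟨N, hN⟩ := Metric.cauchySeq_iff.mp hcs' (ε / 2) (by positivity)
      refine ⟨N, fun n hn m hm => ?_⟩
      have key : ∀ k, |⟪u (φ k), y⟫ - ⟪u (φ k), y'⟫| ≤ ε / 4 := by
        intro k
        rw [← inner_sub_right]
        calc |⟪u (φ k), y - y'⟫| ≤ ‖u (φ k)‖ * ‖y - y'‖ := abs_real_inner_le_norm _ _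
          _ ≤ (C + 1) * (ε / 4 / (C + 1)) := by
              apply mul_le_mul ((hC _).trans (by linarith)) _ (norm_nonneg _) (by positivity)
              rw [← dist_eq_norm]
              exact hdy.le
          _ = ε / 4 := by field_simp
      have h1 := key n
      have h2 := key m
      have h3 := hN n hn m hm
      rw [Real.dist_eq] at h3 ⊢
      have := abs_sub_abs_le_abs_sub (⟪u (φ n), y⟫ - ⟪u (φ m), y⟫)
        ((⟪u (φ n), y⟫ - ⟪u (φ n), y'⟫) - (⟪u (φ m), y⟫ - ⟪u (φ m), y'⟫))
      calc |⟪u (φ n), y⟫ - ⟪u (φ m), y⟫|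
          = |(⟪u (φ n), y⟫ - ⟪u (φ n), y'⟫) - (⟪u (φ m), y⟫ - ⟪u (φ m), y'⟫)
            + (⟪u (φ n), y'⟫ - ⟪u (φ m), y'⟫)| := by ring_nf
        _ ≤ |(⟪u (φ n), y⟫ - ⟪u (φ n), y'⟫) - (⟪u (φ m), y⟫ - ⟪u (φ m), y'⟫)|
            + |⟪u (φ n), y'⟫ - ⟪u (φ m), y'⟫| := abs_add_le _ _
        _ ≤ (|⟪u (φ n), y⟫ - ⟪u (φ n), y'⟫| + |⟪u (φ m), y⟫ - ⟪u (φ m), y'⟫|)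
            + |⟪u (φ n), y'⟫ - ⟪u (φ m), y'⟫| := by
              gcongr; exact abs_sub _ _
        _ < ε := by linarith
    exact cauchySeq_tendsto_of_complete hcs
  -- the closed subspace K
  set K : Submodule ℝ X := (Submodule.span ℝ (Set.range u)).topologicalClosure with hK
  haveI : CompleteSpace K := (Submodule.isClosed_topologicalClosure _).completeSpace_coe
  have hKA : (K : Set X) ⊆ A := hA_closed
  have hexists : ∀ y : K, ∃ l : ℝ, Tendsto (fun n => ⟪u (φ n), (y : X)⟫) atTop (𝓝 l) :=
    fun y => hKA y.2
  choose f hf using hexists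
  -- f is linear and bounded
  have hf_add : ∀ y z : K, f (y + z) = f y + f z := by
    intro y z
    refine tendsto_nhds_unique (hf (y + z)) ?_
    simpa [inner_add_right] using (hf y).add (hf z)
  have hf_smul : ∀ (c : ℝ) (y : K), f (c • y) = c * f y := by
    intro c y
    refine tendsto_nhds_unique (hf (c • y)) ?_
    simpa [inner_smul_right] using (hf y).const_mul c
  have hf_bound : ∀ y : K, |f y| ≤ C * ‖y‖ := by
    intro y
    have h1 : Tendsto (fun n => |⟪u (φ n), (y : X)⟫|) atTop (𝓝 |f y|) :=
      (hf y).abs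
    refine le_of_tendsto h1 (Eventually.of_forall fun n => ?_)
    exact (abs_real_inner_le_norm _ _).trans
      (mul_le_mul_of_nonneg_right (hC _) (norm_nonneg _))
  set flin : K →ₗ[ℝ] ℝ := { toFun := f, map_add' := hf_add, map_smul' := hf_smul }
  set F : K →L[ℝ] ℝ := LinearMap.mkContinuous flin C (fun y => by
    simpa [flin, Real.norm_eq_abs] using hf_bound y)
  set wK : K := (InnerProductSpace.toDual ℝ K).symm F with hwK
  refine ⟨(wK : X), φ, hφ, fun y => ?_⟩
  -- decompose y
  have humem : ∀ n, u n ∈ K :=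
    fun n => Submodule.le_topologicalClosure _ (Submodule.subset_span ⟨n, rfl⟩)
  set P := K.orthogonalProjectionOnto y with hP
  have horth : ∀ n, ⟪u (φ n), y⟫ = ⟪u (φ n), (P : X)⟫ := by
    intro n
    have h0 : ⟪y - (P : X), u (φ n)⟫ = 0 :=
      K.starProjection_inner_eq_zero y (u (φ n)) (humem (φ n))
    have : ⟪u (φ n), y - (P : X)⟫ = 0 := by rwa [real_inner_comm]
    rw [inner_sub_right] at this
    linarith
  have hworth : ⟪(wK : X), y⟫ = ⟪(wK : X), (P : X)⟫ := by
    have h0 : ⟪y - (P : X), (wK : X)⟫ = 0 :=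
      K.starProjection_inner_eq_zero y (wK : X) wK.2
    have : ⟪(wK : X), y - (P : X)⟫ = 0 := by rwa [real_inner_comm]
    rw [inner_sub_right] at this
    linarith
  have hfP : f P = ⟪(wK : X), (P : X)⟫ := by
    have := InnerProductSpace.toDual_symm_apply (𝕜 := ℝ) (E := K) (x := P) (y := F)
    rw [← hwK] at this
    have h2 : ⟪wK, P⟫ = ⟪(wK : X), (P : X)⟫ := Submodule.coe_inner K wK P
    rw [h2] at this
    simpa [F, flin, LinearMap.mkContinuous] using this.symm
  have := hf P
  rw [hfP] at this
  simp only [hworth, horth]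
  exact this

/-- Opial-type lemma. Let `S` be a nonempty subset of a real Hilbert space `X`
and `x : [t0, ∞) → X` a curve such that (i) for every `z ∈ S` the limit
`lim_{t → ∞} ‖x(t) − z‖` exists, and (ii) every weak sequential limit point of `x(t)` as
`t → ∞` belongs to `S`. Then `x(t)` converges weakly to an element of `S` as `t → ∞`. -/
theorem weak_convergence_of_opial
    {X : Type*} [NormedAddCommGroup X] [InnerProductSpace ℝ X] [CompleteSpace X]
    (t0 : ℝ) (ht0 : 0 < t0) (S : Set X) (hS : S.Nonempty) (x : ℝ → X)
    (h1 : ∀ z ∈ S, ∃ l : ℝ, Tendsto (fun t : ℝ => ‖x t - z‖) atTop (𝓝 l))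
    (h2 : ∀ (xbar : X) (tn : ℕ → ℝ), (∀ n, t0 ≤ tn n) → Tendsto tn atTop atTop →
      (∀ y : X, Tendsto (fun n => ⟪x (tn n), y⟫) atTop (𝓝 ⟪xbar, y⟫)) → xbar ∈ S) :
    ∃ xinf ∈ S, ∀ y : X, Tendsto (fun t : ℝ => ⟪x t, y⟫) atTop (𝓝 ⟪xinf, y⟫) := by
  obtain ⟨z0, hz0⟩ := hS
  obtain ⟨l0, hl0⟩ := h1 z0 hz0
  -- boundedness for large t
  have hbdd : ∃ T : ℝ, t0 ≤ T ∧ ∀ t ≥ T, ‖x t‖ ≤ l0 + 1 + ‖z0‖ := by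
    have := Metric.tendsto_atTop.mp hl0 1 one_pos
    obtain ⟨T, hT⟩ := this
    refine ⟨max T t0, le_max_right _ _, fun t ht => ?_⟩
    have h := hT t (le_trans (le_max_left _ _) ht)
    rw [Real.dist_eq, abs_lt] at h
    calc ‖x t‖ = ‖(x t - z0) + z0‖ := by rw [sub_add_cancel]
      _ ≤ ‖x t - z0‖ + ‖z0‖ := norm_add_le _ _
      _ ≤ l0 + 1 + ‖z0‖ := by linarith [h.2]
  obtain ⟨T, hTt0, hT⟩ := hbdd
  set C := l0 + 1 + ‖z0‖ with hCdef
  -- first sequence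
  set tn : ℕ → ℝ := fun n => T + n with htn
  have htn_ge : ∀ n, T ≤ tn n := fun n => by
    simp only [htn, le_add_iff_nonneg_right]
    positivity
  have htn_t0 : ∀ n, t0 ≤ tn n := fun n => hTt0.trans (htn_ge n)
  have htn_top : Tendsto tn atTop atTop :=
    tendsto_atTop_add_const_left _ _ tendsto_natCast_atTop_atTop
  obtain ⟨xbar, φ, hφ, hweak1⟩ := weak_seq_compact (fun n => x (tn n)) C
    (fun n => hT _ (htn_ge n))
  have htop1 : Tendsto (fun n => tn (φ n)) atTop atTop :=
    htn_top.comp hφ.tendsto_atTop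
  have hxbarS : xbar ∈ S := h2 xbar (fun n => tn (φ n)) (fun n => htn_t0 _) htop1 hweak1
  refine ⟨xbar, hxbarS, fun y => ?_⟩
  by_contra hbad
  rw [Metric.tendsto_atTop] at hbad
  push_neg at hbad
  obtain ⟨ε, hε, hfreq⟩ := hbad
  -- build a bad sequence
  have hs : ∀ n : ℕ, ∃ t : ℝ, t ≥ max T n ∧ ε ≤ dist ⟪x t, y⟫ ⟪xbar, y⟫ :=
    fun n => hfreq (max T n)
  choose s hs_ge hs_dist using hs
  have hs_T : ∀ n, T ≤ s n := fun n => le_trans (le_max_left _ _) (hs_ge n)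
  have hs_top : Tendsto s atTop atTop :=
    tendsto_atTop_mono (fun n => le_trans (le_max_right _ _) (hs_ge n))
      tendsto_natCast_atTop_atTop
  obtain ⟨z, ψ, hψ, hweak2⟩ := weak_seq_compact (fun n => x (s n)) C
    (fun n => hT _ (hs_T n))
  have htop2 : Tendsto (fun n => s (ψ n)) atTop atTop := hs_top.comp hψ.tendsto_atTop
  have hzS : z ∈ S := h2 z (fun n => s (ψ n)) (fun n => hTt0.trans (hs_T _)) htop2 hweak2
  -- Opial uniqueness: z = xbar
  obtain ⟨l1, hl1⟩ := h1 xbar hxbarS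
  obtain ⟨l2, hl2⟩ := h1 z hzS
  set c := (l2 ^ 2 - l1 ^ 2 - ‖z‖ ^ 2 + ‖xbar‖ ^ 2) / 2 with hc
  have hg : Tendsto (fun t => (‖x t - z‖ ^ 2 - ‖x t - xbar‖ ^ 2 - ‖z‖ ^ 2 + ‖xbar‖ ^ 2) / 2)
      atTop (𝓝 c) := by
    exact ((((hl2.pow 2).sub (hl1.pow 2)).sub tendsto_const_nhds).add
      tendsto_const_nhds).div_const 2
  have hinner : Tendsto (fun t => ⟪x t, xbar - z⟫) atTop (𝓝 c) := by
    refine hg.congr fun t => ?_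
    have e1 := norm_sub_sq_real (x t) z
    have e2 := norm_sub_sq_real (x t) xbar
    rw [inner_sub_right]
    linarith
  have hub1 : ⟪xbar, xbar - z⟫ = c :=
    tendsto_nhds_unique (hweak1 (xbar - z)) (hinner.comp htop1)
  have hub2 : ⟪z, xbar - z⟫ = c :=
    tendsto_nhds_unique (hweak2 (xbar - z)) (hinner.comp htop2)
  have hzx : z = xbar := by
    have : ⟪xbar - z, xbar - z⟫ = 0 := by
      rw [inner_sub_left, hub1, hub2]; ring
    have h0 : xbar - z = 0 := by
      rwa [real_inner_self_eq_norm_sq, pow_eq_zero_iff (two_ne_zero), norm_eq_zero] at this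
    symm; exact sub_eq_zero.mp h0
  -- contradiction
  have hlim : Tendsto (fun n => dist ⟪x (s (ψ n)), y⟫ ⟪xbar, y⟫) atTop (𝓝 0) := by
    have := hweak2 y
    rw [hzx] at this
    simpa [dist_eq_norm] using (this.sub_const ⟪xbar, y⟫).norm
  have : ε ≤ 0 := ge_of_tendsto hlim (Eventually.of_forall fun n => hs_dist (ψ n))
  linarith
end

section
/- Suppose ∇g is Lipschitz continuous on X with constant L_g > 0. Then for every initial point (x0, y0) ∈ X × X there exists a unique continuously differentiable pair (x, y) : [t0, ∞) → X × X with x(t0) = x0, y(t0) = y0 satisfying, for all t ≥ t0, the first-order system x'(t) = y(t) − β ∇g(x(t)) and y'(t) = −(α/t^q) y(t) − (δ(t) − βα/t^q) ∇g(x(t)) − (a/t^p) x(t), i.e., the system (DS) admits a unique strong global solution for every initial condition. -/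
/-!
Writing `u = (x, y)`, the system is an ODE `u' = F t u` on `X × X`. On every bounded time interval
`[t0, T]` the field `F t` is Lipschitz uniformly in `t`: `∇g` is Lipschitz and the coefficients
`α / t^q`, `δ t - βα / t^q`, `a / t^p` are continuous, hence bounded, there. If `K` is such a
constant, Picard–Lindelöf solves the equation on any interval of length `1 / (2K)` from any
initial value, and gluing finitely many such pieces solves it on `[t0, T]`. Uniqueness on each
`[t0, T]` (Gronwall) makes these solutions compatible, so they patch to one on `[t0, ∞)`.
-/

open Filter Set
open scoped Topology NNReal

section IntegralCurve

variable {E : Type*} [NormedAddCommGroup E] [NormedSpace ℝ E] {v : ℝ → E → E}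

lemma IsIntegralCurveOn.eqOn_Icc {γ γ' : ℝ → E} {a b : ℝ} {K : ℝ≥0}
    (hv : ∀ t ∈ Ico a b, LipschitzWith K (v t))
    (hγ : IsIntegralCurveOn γ v (Icc a b)) (hγ' : IsIntegralCurveOn γ' v (Icc a b))
    (ha : γ a = γ' a) : EqOn γ γ' (Icc a b) :=
  ODE_solution_unique_of_mem_Icc_right (s := fun _ ↦ univ)
    (fun t ht ↦ (hv t ht).lipschitzOnWith) hγ.continuousOn
    (fun t ht ↦ (hγ t (Ico_subset_Icc_self ht)).mono_of_mem_nhdsWithin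
      (Icc_mem_nhdsGE_of_mem ht))
    (fun _ _ ↦ trivial) hγ'.continuousOn
    (fun t ht ↦ (hγ' t (Ico_subset_Icc_self ht)).mono_of_mem_nhdsWithin
      (Icc_mem_nhdsGE_of_mem ht))
    (fun _ _ ↦ trivial) ha

lemma IsIntegralCurveOn.piecewise_Icc {γ γ' : ℝ → E} {a b c : ℝ}
    (hab : a ≤ b) (hbc : b ≤ c) (hγ : IsIntegralCurveOn γ v (Icc a b))
    (hγ' : IsIntegralCurveOn γ' v (Icc b c)) (hb : γ b = γ' b) :
    IsIntegralCurveOn (fun t ↦ if t ≤ b then γ t else γ' t) v (Icc a c) := by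
  set σ : ℝ → E := fun t ↦ if t ≤ b then γ t else γ' t
  have hσγ : EqOn σ γ (Icc a b) := fun t ht ↦ if_pos ht.2
  have hσγ' : EqOn σ γ' (Icc b c) := fun t ht ↦ by
    rcases ht.1.eq_or_lt with rfl | hbt
    · exact (if_pos le_rfl).trans hb
    · exact if_neg hbt.not_ge
  intro t ht
  rw [← Icc_union_Icc_eq_Icc hab hbc]
  refine HasDerivWithinAt.union ?_ ?_
  · by_cases htb : t ≤ b
    · have := (hγ t ⟨ht.1, htb⟩).congr_of_mem hσγ ⟨ht.1, htb⟩
      rwa [← hσγ ⟨ht.1, htb⟩] at this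
    · exact HasFDerivWithinAt.of_notMem_closure (by rw [closure_Icc]; exact fun h ↦ htb h.2)
  · by_cases hbt : b ≤ t
    · have := (hγ' t ⟨hbt, ht.2⟩).congr_of_mem hσγ' ⟨hbt, ht.2⟩
      rwa [← hσγ' ⟨hbt, ht.2⟩] at this
    · exact HasFDerivWithinAt.of_notMem_closure (by rw [closure_Icc]; exact fun h ↦ hbt h.1)

lemma IsIntegralCurveOn.eqOn_Ici {γ γ' : ℝ → E} {a : ℝ}
    (hv : ∀ b, ∃ K : ℝ≥0, ∀ t ∈ Icc a b, LipschitzWith K (v t))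
    (hγ : IsIntegralCurveOn γ v (Ici a)) (hγ' : IsIntegralCurveOn γ' v (Ici a))
    (ha : γ a = γ' a) : EqOn γ γ' (Ici a) := fun b hb ↦ by
  obtain ⟨K, hK⟩ := hv b
  exact (hγ.mono Icc_subset_Ici_self).eqOn_Icc (fun t ht ↦ hK t (Ico_subset_Icc_self ht))
    (hγ'.mono Icc_subset_Ici_self) ha ⟨hb, le_rfl⟩

variable [CompleteSpace E]

lemma exists_isIntegralCurveOn_Icc_of_two_mul_le_one {a b : ℝ} {K : ℝ≥0} (hab : a ≤ b)
    (hK : 2 * K * (b - a) ≤ 1) (hv : ∀ t ∈ Icc a b, LipschitzWith K (v t))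
    (hcont : ∀ x, ContinuousOn (v · x) (Icc a b)) (x₀ : E) :
    ∃ γ : ℝ → E, γ a = x₀ ∧ IsIntegralCurveOn γ v (Icc a b) := by
  obtain ⟨C, hC⟩ := isCompact_Icc.exists_bound_of_continuousOn (hcont x₀)
  set N : ℝ≥0 := C.toNNReal
  have hN : ∀ t ∈ Icc a b, ‖v t x₀‖ ≤ N :=
    fun t ht ↦ (hC t ht).trans (Real.le_coe_toNNReal C)
  -- with `K (b - a) ≤ 1/2`, the ball of radius `2 N (b - a)` is not left before time `b`
  set r : ℝ≥0 := 2 * N * (b - a).toNNReal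
  have hr : (r : ℝ) = 2 * N * (b - a) := by simp [r, hab]
  have hPL : IsPicardLindelof v (⟨a, left_mem_Icc.2 hab⟩ : Icc a b) x₀ r 0 (N + K * r) K :=
    { lipschitzOnWith := fun t ht ↦ (hv t ht).lipschitzOnWith
      continuousOn := fun x _ ↦ hcont x
      norm_le := fun t ht x hx ↦ by
        have hlip := (hv t ht).norm_sub_le x x₀
        have hx' := mem_closedBall_iff_norm.1 hx
        calc ‖v t x‖ ≤ ‖v t x₀‖ + ‖v t x - v t x₀‖ := norm_le_insert' _ _
          _ ≤ N + K * r := by gcongr; exacts [hN t ht, hlip.trans (by gcongr)]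
      mul_max_le := by
        rw [sub_self, max_eq_left (sub_nonneg.2 hab), NNReal.coe_zero, sub_zero]
        push_cast
        rw [hr]
        nlinarith [N.coe_nonneg, sub_nonneg.2 hab] }
  exact hPL.exists_eq_forall_mem_Icc_hasDerivWithinAt₀

lemma exists_isIntegralCurveOn_Icc {a b : ℝ} {K : ℝ≥0}
    (hv : ∀ t ∈ Icc a b, LipschitzWith K (v t))
    (hcont : ∀ x, ContinuousOn (v · x) (Icc a b)) (x₀ : E) :
    ∃ γ : ℝ → E, γ a = x₀ ∧ IsIntegralCurveOn γ v (Icc a b) := by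
  rcases lt_or_ge b a with hba | hab
  · exact ⟨fun _ ↦ x₀, rfl, fun t ht ↦ absurd (ht.1.trans ht.2) hba.not_ge⟩
  set h : ℝ := (2 * K + 1)⁻¹
  have hh : 0 < h := by positivity
  have hKh : 2 * K * h ≤ 1 := by
    rw [← div_eq_mul_inv, div_le_one (by positivity)]; linarith
  have step : ∀ n : ℕ, ∀ c ∈ Icc a b, c ≤ a + n * h →
      ∃ γ : ℝ → E, γ a = x₀ ∧ IsIntegralCurveOn γ v (Icc a c) := by
    intro n
    induction n with
    | zero =>
      intro c hc hca
      obtain rfl : c = a := le_antisymm (by simpa using hca) hc.1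
      exact exists_isIntegralCurveOn_Icc_of_two_mul_le_one le_rfl (by simp)
        (fun t ht ↦ hv t ⟨ht.1, ht.2.trans hc.2⟩)
        (fun x ↦ (hcont x).mono (Icc_subset_Icc_right hc.2)) x₀
    | succ n ih =>
      intro c hc hcn
      set s := a + n * h
      rcases le_or_gt c s with hcs | hsc
      · exact ih c hc hcs
      have has : a ≤ s := le_add_of_nonneg_right (by positivity)
      obtain ⟨γ, hγa, hγ⟩ := ih s ⟨has, hsc.le.trans hc.2⟩ le_rfl
      have hsub : Icc s c ⊆ Icc a b := Icc_subset_Icc has hc.2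
      obtain ⟨γ', hγ's, hγ'⟩ := exists_isIntegralCurveOn_Icc_of_two_mul_le_one hsc.le
        (hKh.trans' (by push_cast at hcn; gcongr; linarith))
        (fun t ht ↦ hv t (hsub ht)) (fun x ↦ (hcont x).mono hsub) (γ s)
      exact ⟨_, (if_pos has).trans hγa, hγ.piecewise_Icc has hsc.le hγ' hγ's.symm⟩
  obtain ⟨n, hn⟩ := exists_nat_ge ((b - a) / h)
  exact step n b ⟨hab, le_rfl⟩ (by rw [div_le_iff₀ hh] at hn; linarith)

lemma exists_isIntegralCurveOn_Ici {a : ℝ}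
    (hv : ∀ b, ∃ K : ℝ≥0, ∀ t ∈ Icc a b, LipschitzWith K (v t))
    (hcont : ∀ x, ContinuousOn (v · x) (Ici a)) (x₀ : E) :
    ∃ γ : ℝ → E, γ a = x₀ ∧ IsIntegralCurveOn γ v (Ici a) := by
  have (b : ℝ) : ∃ γ : ℝ → E, γ a = x₀ ∧ IsIntegralCurveOn γ v (Icc a b) := by
    obtain ⟨K, hK⟩ := hv b
    exact exists_isIntegralCurveOn_Icc hK (fun x ↦ (hcont x).mono Icc_subset_Ici_self) x₀
  choose γ hγa hγ using this
  have hγ_eq {b c t : ℝ} (hb : t ∈ Icc a b) (hc : t ∈ Icc a c) : γ b t = γ c t := by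
    obtain ⟨K, hK⟩ := hv (min b c)
    exact ((hγ b).mono (Icc_subset_Icc_right (min_le_left b c))).eqOn_Icc
      (fun t ht ↦ hK t (Ico_subset_Icc_self ht))
      ((hγ c).mono (Icc_subset_Icc_right (min_le_right b c)))
      ((hγa b).trans (hγa c).symm) ⟨hb.1, le_min hb.2 hc.2⟩
  have hdiag {b : ℝ} : EqOn (fun t ↦ γ t t) (γ b) (Icc a b) :=
    fun t ht ↦ hγ_eq ⟨ht.1, le_rfl⟩ ht
  refine ⟨fun t ↦ γ t t, hdiag ⟨le_rfl, le_rfl⟩ |>.trans (hγa a), fun t ht ↦ ?_⟩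
  have ht' : t ∈ Icc a (t + 1) := ⟨ht, by linarith⟩
  have := ((hγ (t + 1)) t ht').congr_of_mem hdiag ht'
  rw [← hdiag ht', ← Ici_inter_Iic] at this
  exact (hasDerivWithinAt_inter (Iic_mem_nhds (lt_add_one t))).1 this

end IntegralCurve

lemma exists_lipschitzWith_of_continuousOn {T α β : Type*} [TopologicalSpace T]
    [PseudoEMetricSpace α] [PseudoEMetricSpace β] {v : T → α → β} {K : T → ℝ≥0} {s : Set T}
    (hs : IsCompact s) (hK : ContinuousOn K s) (hv : ∀ t ∈ s, LipschitzWith (K t) (v t)) :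
    ∃ K' : ℝ≥0, ∀ t ∈ s, LipschitzWith K' (v t) := by
  obtain ⟨K', hK'⟩ := hs.bddAbove_image hK
  exact ⟨K', fun t ht ↦ (hv t ht).weaken (hK' ⟨t, ht, rfl⟩)⟩

section DS

variable {X : Type*} [NormedAddCommGroup X] [NormedSpace ℝ X]

noncomputable def dsField (α β a p q : ℝ) (g' : X → X) (δ : ℝ → ℝ) (t : ℝ) (u : X × X) :
    X × X :=
  (u.2 - β • g' u.1, -(α / t ^ q) • u.2 - (δ t - β * α / t ^ q) • g' u.1 - (a / t ^ p) • u.1)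

variable {α β a p q t0 : ℝ} {g' : X → X} {δ : ℝ → ℝ}

lemma lipschitzWith_dsField {Lg : ℝ≥0} (hg' : LipschitzWith Lg g') (t : ℝ) :
    LipschitzWith (max (1 + ‖β‖₊ * Lg)
      (‖-(α / t ^ q)‖₊ + ‖δ t - β * α / t ^ q‖₊ * Lg + ‖a / t ^ p‖₊))
      (dsField α β a p q g' δ t) := by
  have hgx : LipschitzWith Lg (fun u : X × X ↦ g' u.1) :=
    (hg'.comp LipschitzWith.prod_fst).weaken (mul_one Lg).le
  have hsmul (c : ℝ) {K : ℝ≥0} {f : X × X → X} (hf : LipschitzWith K f) :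
      LipschitzWith (‖c‖₊ * K) (fun u ↦ c • f u) :=
    (lipschitzWith_smul c).comp hf
  refine LipschitzWith.prodMk ?_ ?_
  · exact (LipschitzWith.prod_snd.sub (hsmul β hgx)).weaken (by simp)
  · exact (((hsmul _ LipschitzWith.prod_snd).sub (hsmul _ hgx)).sub
      (hsmul _ LipschitzWith.prod_fst)).weaken (by simp)

lemma continuousOn_div_rpow (c r : ℝ) (ht0 : 0 < t0) :
    ContinuousOn (fun t : ℝ ↦ c / t ^ r) (Ici t0) :=
  continuousOn_const.div (continuousOn_id.rpow_const fun _ ht ↦ Or.inl (ht0.trans_le ht).ne')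
    fun _ ht ↦ (Real.rpow_pos_of_pos (ht0.trans_le ht) r).ne'

lemma continuousOn_dsField (ht0 : 0 < t0) (hδ : ContinuousOn δ (Ici t0)) (u : X × X) :
    ContinuousOn (dsField α β a p q g' δ · u) (Ici t0) := by
  have := continuousOn_div_rpow α q ht0
  have := continuousOn_div_rpow (β * α) q ht0
  have := continuousOn_div_rpow a p ht0
  unfold dsField
  fun_prop

lemma exists_lipschitzWith_dsField {Lg : ℝ≥0} (ht0 : 0 < t0) (hδ : ContinuousOn δ (Ici t0))
    (hg' : LipschitzWith Lg g') (b : ℝ) :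
    ∃ K : ℝ≥0, ∀ t ∈ Icc t0 b, LipschitzWith K (dsField α β a p q g' δ t) := by
  refine exists_lipschitzWith_of_continuousOn isCompact_Icc ?_
    fun t _ ↦ lipschitzWith_dsField hg' t
  have hsub : Icc t0 b ⊆ Ici t0 := Icc_subset_Ici_self
  have := (continuousOn_div_rpow α q ht0).mono hsub
  have := (continuousOn_div_rpow (β * α) q ht0).mono hsub
  have := (continuousOn_div_rpow a p ht0).mono hsub
  have := hδ.mono hsub
  fun_prop

end DS

theorem existence_uniqueness_DS_general
    {X : Type*} [NormedAddCommGroup X] [InnerProductSpace ℝ X] [CompleteSpace X]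
    (t0 α β a p q Lg : ℝ) (ht0 : 0 < t0)
    (g' : X → X)
    (hlip : ∀ u v : X, ‖g' u - g' v‖ ≤ Lg * ‖u - v‖)
    (δ δ' : ℝ → ℝ)
    (hδderiv : ∀ t ∈ Set.Ici t0, HasDerivWithinAt δ (δ' t) (Set.Ici t0) t)
    (x0 y0 : X) :
    ∃ x y : ℝ → X,
      (x t0 = x0 ∧ y t0 = y0) ∧
      (∀ t ∈ Set.Ici t0,
        HasDerivWithinAt x (y t - β • g' (x t)) (Set.Ici t0) t) ∧
      (∀ t ∈ Set.Ici t0,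
        HasDerivWithinAt y
          (-(α / t ^ q) • y t - (δ t - β * α / t ^ q) • g' (x t) - (a / t ^ p) • x t)
          (Set.Ici t0) t) ∧
      (∀ x₂ y₂ : ℝ → X,
        (x₂ t0 = x0 ∧ y₂ t0 = y0) →
        (∀ t ∈ Set.Ici t0,
          HasDerivWithinAt x₂ (y₂ t - β • g' (x₂ t)) (Set.Ici t0) t) →
        (∀ t ∈ Set.Ici t0,
          HasDerivWithinAt y₂
            (-(α / t ^ q) • y₂ t - (δ t - β * α / t ^ q) • g' (x₂ t) - (a / t ^ p) • x₂ t)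
            (Set.Ici t0) t) →
        ∀ t ∈ Set.Ici t0, x₂ t = x t ∧ y₂ t = y t) := by
  have hδ : ContinuousOn δ (Ici t0) := fun t ht ↦ (hδderiv t ht).continuousWithinAt
  have hg' : LipschitzWith Lg.toNNReal g' :=
    .of_dist_le' fun u v ↦ by simpa only [dist_eq_norm] using hlip u v
  have hK : ∀ b, ∃ K : ℝ≥0, ∀ t ∈ Icc t0 b, LipschitzWith K (dsField α β a p q g' δ t) :=
    exists_lipschitzWith_dsField ht0 hδ hg'
  obtain ⟨u, hu0, hu⟩ := exists_isIntegralCurveOn_Ici hK (continuousOn_dsField ht0 hδ) (x0, y0)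
  refine ⟨fun t ↦ (u t).1, fun t ↦ (u t).2, by simp [hu0],
    fun t ht ↦ (ContinuousLinearMap.fst ℝ X X).hasFDerivAt.comp_hasDerivWithinAt t (hu t ht),
    fun t ht ↦ (ContinuousLinearMap.snd ℝ X X).hasFDerivAt.comp_hasDerivWithinAt t (hu t ht),
    ?_⟩
  rintro x₂ y₂ ⟨hx₂, hy₂⟩ hx₂' hy₂' t ht
  have hu₂ : IsIntegralCurveOn (fun t ↦ (x₂ t, y₂ t)) (dsField α β a p q g' δ) (Ici t0) :=
    fun t ht ↦ (hx₂' t ht).prodMk (hy₂' t ht)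
  exact Prod.ext_iff.1 (hu₂.eqOn_Ici hK hu (by simp [hx₂, hy₂, hu0]) ht)

/-- Theorem 2.1: existence and uniqueness of the strong global solution of the
dynamical system (DS). If `∇g` is `L_g`-Lipschitz continuous on `X`, then for every initial
point `(x0, y0) ∈ X × X` there is a unique continuously differentiable pair
`(x, y) : [t0, ∞) → X × X` with `x t0 = x0`, `y t0 = y0` solving
`x' t = y t − β ∇g(x t)` and
`y' t = −(α/t^q) y t − (δ(t) − βα/t^q) ∇g(x t) − (a/t^p) x t` for all `t ≥ t0`. -/
theorem existence_uniqueness_DS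
    {X : Type*} [NormedAddCommGroup X] [InnerProductSpace ℝ X] [CompleteSpace X]
    (t0 α β a p q Lg : ℝ) (ht0 : 0 < t0) (hα : 0 < α) (hβ : 0 < β) (ha : 0 < a)
    (hp : 0 < p) (hq0 : 0 < q) (hq1 : q < 1) (hLg : 0 < Lg)
    (g : X → ℝ) (g' : X → X)
    (hgconv : ConvexOn ℝ Set.univ g)
    (hgrad : ∀ u : X, HasGradientAt g (g' u) u)
    (hlip : ∀ u v : X, ‖g' u - g' v‖ ≤ Lg * ‖u - v‖)
    (δ δ' : ℝ → ℝ)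
    (hδpos : ∀ t ∈ Set.Ici t0, 0 < δ t)
    (hδmono : MonotoneOn δ (Set.Ici t0))
    (hδderiv : ∀ t ∈ Set.Ici t0, HasDerivWithinAt δ (δ' t) (Set.Ici t0) t)
    (hδtop : Tendsto δ atTop atTop)
    (x0 y0 : X) :
    ∃ x y : ℝ → X,
      (x t0 = x0 ∧ y t0 = y0) ∧
      (∀ t ∈ Set.Ici t0,
        HasDerivWithinAt x (y t - β • g' (x t)) (Set.Ici t0) t) ∧
      (∀ t ∈ Set.Ici t0,
        HasDerivWithinAt y
          (-(α / t ^ q) • y t - (δ t - β * α / t ^ q) • g' (x t) - (a / t ^ p) • x t)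
          (Set.Ici t0) t) ∧
      (∀ x₂ y₂ : ℝ → X,
        (x₂ t0 = x0 ∧ y₂ t0 = y0) →
        (∀ t ∈ Set.Ici t0,
          HasDerivWithinAt x₂ (y₂ t - β • g' (x₂ t)) (Set.Ici t0) t) →
        (∀ t ∈ Set.Ici t0,
          HasDerivWithinAt y₂
            (-(α / t ^ q) • y₂ t - (δ t - β * α / t ^ q) • g' (x₂ t) - (a / t ^ p) • x₂ t)
            (Set.Ici t0) t) →
        ∀ t ∈ Set.Ici t0, x₂ t = x t ∧ y₂ t = y t) :=
  existence_uniqueness_DS_general t0 α β a p q Lg ht0 g' hlip δ δ' hδderiv x0 y0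
end

section
/- Assume q + 1 < p ≤ 2, with a ≥ q(1 − q) in the case p = 2, and assume the growth condition (b). Let x : [t0, ∞) → X be a solution of the system (DS). Then for any x* ∈ argmin g, the trajectory x(t) is bounded on [t0, ∞), and as t → ∞: g(x(t)) − g(x*) = O(1/(δ(t) t^{2q})) and ‖ẋ(t) + β ∇g(x(t))‖ = O(1/t^q). -/
open Filter Set Asymptotics
open scoped Topology

local notation "⟪" x ", " y "⟫" => @inner ℝ _ _ x y

theorem grp1 (K₁ q t d dp γ A1 iuG c : ℝ) (hcdef : c = K₁+q+1) (hq0 : 0 < q) (ht : 0 < t)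
    (hd : 0 < d)
    (hA1 : 0 < A1) (hγ : 0 ≤ γ) (hgr : t*dp ≤ K₁*d) (hγG : γ ≤ iuG) (hK₁ : 0 < K₁) :
    dp*(A1*(t*t*t))*γ + d*((q+1)*(A1*(t*t)))*γ - c*d*(A1*(t*t))*iuG ≤ 0 := by
  subst hcdef
  have hx1 : 0 ≤ A1*(t*t)*γ := by positivity
  have m1 : (t*dp)*(A1*(t*t)*γ) ≤ (K₁*d)*(A1*(t*t)*γ) := mul_le_mul_of_nonneg_right hgr hx1
  have hx2 : (0:ℝ) ≤ (K₁+q+1)*d*(A1*(t*t)) := by positivity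
  have m2 : (K₁+q+1)*d*(A1*(t*t))*γ ≤ (K₁+q+1)*d*(A1*(t*t))*iuG :=
    mul_le_mul_of_nonneg_left hγG hx2
  nlinarith [m1, m2]

theorem grp2 (α q c A1 t U V iuv : ℝ) (hα : 0 < α) (h1q : 0 < 1-q) (hc : 0 < c)
    (hcq : 0 < c+q) (hA1 : 0 < A1) (ht : 0 < t)
    (hUnn : 0 ≤ U) (hVnn : 0 ≤ V) (hiuv : iuv ≤ U*V)
    (e1 : 4*(c+q)^2*(A1*(t*t)) ≤ α*(1-q)*t) :
    c*(c+q)*(A1*t)*iuv + (q-1)*c^2*A1/2*U^2 ≤ α/8*t*V^2 := by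
  have hc2 : (0:ℝ) ≤ c*(c+q)*(A1*t) := by positivity
  have m3 : c*(c+q)*(A1*t)*iuv ≤ c*(c+q)*(A1*t)*(U*V) := mul_le_mul_of_nonneg_left hiuv hc2
  have m4 : 0 ≤ A1 * ((1-q)*c*U - (c+q)*t*V)^2 := by positivity
  have m5 := mul_le_mul_of_nonneg_right e1 (sq_nonneg V)
  nlinarith [m3, m4, m5, h1q]

theorem grp3 (β c a A1 A2 t iuG : ℝ) (hβ : 0 < β) (ha : 0 < a) (hA1 : 0 < A1)
    (hA2 : 0 < A2) (ht : 0 < t) (hiuG : 0 ≤ iuG) :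
    -(β*c^2*(A1*t))*iuG - a*β*(A2*t)*iuG ≤ 0 := by
  nlinarith [mul_nonneg (by positivity : (0:ℝ) ≤ β*c^2*(A1*t) + a*β*(A2*t)) hiuG]

theorem grp4 (α q c A1 t V : ℝ) (hα : 0 < α) (ht : 0 < t)
    (e2 : (c+(q+1)/2)*(A1*(t*t)) ≤ α/4*t) :
    ((c+(q+1)/2)*(A1*(t*t)) - α*t)*V^2 ≤ -(3/4)*(α*t)*V^2 := by
  nlinarith [mul_le_mul_of_nonneg_right e2 (sq_nonneg V)]

theorem grp5 (α β q c d A1 t V W ivG : ℝ) (hα : 0 < α) (hβ : 0 < β) (hc : 0 < c)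
    (hd : 0 < d) (hA1 : 0 < A1) (ht : 0 < t) (hVnn : 0 ≤ V) (hWnn : 0 ≤ W)
    (hivG : ivG ≤ V*W)
    (e3 : c*(A1*(t*t)) ≤ α*t) (e4 : 8*α*β ≤ d*(A1*(t*t))) :
    (α*β*t - β*c*(A1*(t*t)))*ivG - β*d*(A1*(t*t*t))*W^2
      ≤ α/4*t*V^2 - β*d*(A1*(t*t*t))/2*W^2 := by
  have hco : 0 ≤ α*β*t - β*c*(A1*(t*t)) := by nlinarith [mul_le_mul_of_nonneg_left e3 hβ.le]
  have hco2 : α*β*t - β*c*(A1*(t*t)) ≤ α*β*t := by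
    have : (0:ℝ) ≤ β*c*(A1*(t*t)) := by positivity
    linarith
  have m6 : (α*β*t - β*c*(A1*(t*t)))*ivG ≤ (α*β*t - β*c*(A1*(t*t)))*(V*W) :=
    mul_le_mul_of_nonneg_left hivG hco
  have m7 : (α*β*t - β*c*(A1*(t*t)))*(V*W) ≤ α*β*t*(V*W) :=
    mul_le_mul_of_nonneg_right hco2 (mul_nonneg hVnn hWnn)
  have m8 : α*β*t*(V*W) ≤ α/4*t*V^2 + α*β^2*t*W^2 := by
    nlinarith [mul_nonneg (mul_nonneg hα.le ht.le) (sq_nonneg (V - 2*β*W))]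
  have m9 : α*β^2*t*W^2 ≤ β*d*(A1*(t*t*t))/2*W^2 := by
    nlinarith [mul_le_mul_of_nonneg_right e4
      (by positivity : (0:ℝ) ≤ β*t*W^2),
      (by positivity : (0:ℝ) ≤ β*d*(A1*(t*t*t))*W^2)]
  linarith

theorem grp6 (c a A2 U Sn iuS : ℝ) (hc : 0 < c) (ha : 0 < a) (hA2 : 0 < A2)
    (hUnn : 0 ≤ U) (hSnn : 0 ≤ Sn) (hiuS : -(U*Sn) ≤ iuS) :
    -(c*a*A2)*U^2 - (c*a*A2)*iuS ≤ c*a/2*A2*Sn^2 := by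
  have hca : (0:ℝ) ≤ c*a*A2 := by positivity
  nlinarith [mul_le_mul_of_nonneg_left hiuS hca, mul_nonneg hca (sq_nonneg (U - Sn/2)),
    mul_nonneg hca (sq_nonneg Sn)]

theorem grp7 (β a d d₀ A1 A2 t W Sn iGS : ℝ) (hβ : 0 < β) (ha : 0 < a) (hd : 0 < d)
    (hd₀ : 0 < d₀) (hdd : d₀ ≤ d) (hA1 : 0 < A1) (hA2 : 0 < A2) (ht : 0 < t)
    (hWnn : 0 ≤ W) (hSnn : 0 ≤ Sn) (hiGS : -(W*Sn) ≤ iGS) (hbr : d₀*A2 ≤ d*(A1*t)) :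
    -(a*β*(A2*t))*iGS ≤ β*d*(A1*(t*t*t))/2*W^2 + a^2*β/(2*d₀)*Sn^2*A2 := by
  have habt : (0:ℝ) ≤ a*β*(A2*t) := by positivity
  have stepA : -(a*β*(A2*t))*iGS ≤ a*β*(A2*t)*(W*Sn) := by
    nlinarith [mul_le_mul_of_nonneg_left hiGS habt]
  have hsq : 0 ≤ β*A2*(d₀*t*W - a*Sn)^2 := by positivity
  have stepB : a*β*(A2*t)*(W*Sn) - β*d₀*(A2*(t*t))/2*W^2 ≤ a^2*β/(2*d₀)*Sn^2*A2 := by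
    rw [div_mul_eq_mul_div, div_mul_eq_mul_div, div_mul_eq_mul_div,
      le_div_iff₀ (by linarith : (0:ℝ) < 2*d₀)]
    nlinarith [hsq]
  have stepC : β*d₀*(A2*(t*t))/2*W^2 ≤ β*d*(A1*(t*t*t))/2*W^2 := by
    nlinarith [mul_le_mul_of_nonneg_left hbr
      (by positivity : (0:ℝ) ≤ β*(t*t)*W^2/2)]
  linarith

theorem grp8 (a q p A2 XX : ℝ) (ha : 0 < a) (hp1 : q + 1 < p) (hA2 : 0 < A2)
    (hXX : 0 ≤ XX) :
    a/2*(q+1-p)*A2*XX ≤ 0 := by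
  have hco : (0:ℝ) ≤ a/2*(p-q-1)*A2 := by
    apply mul_nonneg (mul_nonneg (by linarith) (by linarith)) hA2.le
  nlinarith [mul_nonneg hco hXX]


set_option maxHeartbeats 1000000 in
theorem key_ineq {X : Type*} [NormedAddCommGroup X] [InnerProductSpace ℝ X]
    (t d dp γ α β a p q c K₁ d₀ : ℝ) (u vt G S xt x't vdt zt zdt : X)
    (hα : 0 < α) (hβ : 0 < β) (ha : 0 < a) (hq0 : 0 < q) (hq1 : q < 1)
    (hp1 : q + 1 < p)
    (hcdef : c = K₁ + q + 1) (hK₁ : 0 < K₁)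
    (ht1 : 1 ≤ t)
    (hd : 0 < d) (hd₀ : 0 < d₀) (hdd : d₀ ≤ d)
    (hgr : t * dp ≤ K₁ * d)
    (hγ : 0 ≤ γ) (hγG : γ ≤ ⟪u, G⟫)
    (e1 : 4*(c+q)^2 * t^q ≤ α*(1-q)*t) (e2 : (c+(q+1)/2)*t^q ≤ α/4*t)
    (e3 : c*t^q ≤ α*t) (e4 : 8*α*β ≤ d₀ * t^q)
    (hx : xt = u + S) (hx' : x't = vt - β • G)
    (hvd : vdt = -((α / t^q) • x't + d • G + (a / t^p) • xt))
    (hz : zt = c • u + t • vt) (hzd : zdt = c • x't + (t • vdt + vt)) :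
    (dp * (t^(q+1) * γ) + d * ((q+1) * t^q * γ + t^(q+1) * ⟪G, x't⟫))
      + ((q-1) * t^(q-2) / 2 * ⟪zt, zt⟫ + t^(q-1)/2 * (⟪zt, zdt⟫ + ⟪zdt, zt⟫))
      + α * c / 2 * (⟪u, x't⟫ + ⟪x't, u⟫)
      + a / 2 * ((q+1-p) * t^(q-p) * ⟪xt, xt⟫ + t^(q+1-p) * (⟪xt, x't⟫ + ⟪x't, xt⟫))
      ≤ (c*a/2*‖S‖^2 + a^2*β/(2*d₀)*‖S‖^2) * t^(q-p) := by
  have ht : (0:ℝ) < t := lt_of_lt_of_le one_pos ht1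
  have htne : t ≠ 0 := ne_of_gt ht
  have hcpos : 0 < c := by rw [hcdef]; linarith
  have hstep : ∀ r : ℝ, t ^ (r+1) = t ^ r * t := fun r => by
    rw [Real.rpow_add ht, Real.rpow_one]
  set A1 : ℝ := t ^ (q-2) with hA1
  set A2 : ℝ := t ^ (q-p) with hA2
  have hA1pos : 0 < A1 := Real.rpow_pos_of_pos ht _
  have hA2pos : 0 < A2 := Real.rpow_pos_of_pos ht _
  have e_q : t ^ q = A1 * (t*t) := by
    rw [hA1, show q = (q-2)+1+1 by ring, hstep ((q-2)+1), hstep (q-2)]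
    ring
  have e_q1 : t ^ (q+1) = A1 * (t*t*t) := by
    rw [hstep q, e_q]; ring
  have e_qm1 : t ^ (q-1) = A1 * t := by
    rw [hA1, show q-1 = (q-2)+1 by ring, hstep (q-2)]
  have e_qp1 : t ^ (q+1-p) = A2 * t := by
    rw [hA2, show q+1-p = (q-p)+1 by ring, hstep (q-p)]
  have e_p : t ^ p = A1 * (t*t) / A2 := by
    rw [hA2, eq_div_iff (ne_of_gt (Real.rpow_pos_of_pos ht (q-p))), ← Real.rpow_add ht,
      show p + (q-p) = q by ring, e_q]
  have hA2A1 : A2 ≤ A1 * t := by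
    rw [hA2, ← e_qm1]
    exact Real.rpow_le_rpow_of_exponent_le ht1 (by linarith)
  -- inner product atoms
  have c1 : ⟪vt, u⟫ = ⟪u, vt⟫ := real_inner_comm _ _
  have c2 : ⟪G, u⟫ = ⟪u, G⟫ := real_inner_comm _ _
  have c3 : ⟪S, u⟫ = ⟪u, S⟫ := real_inner_comm _ _
  have c4 : ⟪G, vt⟫ = ⟪vt, G⟫ := real_inner_comm _ _
  have c5 : ⟪S, vt⟫ = ⟪vt, S⟫ := real_inner_comm _ _
  have c6 : ⟪S, G⟫ = ⟪G, S⟫ := real_inner_comm _ _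
  have hexp : (dp * (t^(q+1) * γ) + d * ((q+1) * t^q * γ + t^(q+1) * ⟪G, x't⟫))
      + ((q-1) * t^(q-2) / 2 * ⟪zt, zt⟫ + t^(q-1)/2 * (⟪zt, zdt⟫ + ⟪zdt, zt⟫))
      + α * c / 2 * (⟪u, x't⟫ + ⟪x't, u⟫)
      + a / 2 * ((q+1-p) * t^(q-p) * ⟪xt, xt⟫ + t^(q+1-p) * (⟪xt, x't⟫ + ⟪x't, xt⟫))
      = (dp*(A1*(t*t*t))*γ + d*((q+1)*(A1*(t*t)))*γ - c*d*(A1*(t*t))*⟪u, G⟫)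
      + (c*(c+q)*(A1*t)*⟪u, vt⟫ + (q-1)*c^2*A1/2*⟪u, u⟫)
      + (-(β*c^2*(A1*t))*⟪u, G⟫ - a*β*(A2*t)*⟪u, G⟫)
      + (((c+(q+1)/2)*(A1*(t*t)) - α*t)*⟪vt, vt⟫)
      + ((α*β*t - β*c*(A1*(t*t)))*⟪vt, G⟫ - β*d*(A1*(t*t*t))*⟪G, G⟫)
      + (-(c*a*A2)*⟪u, u⟫ - (c*a*A2)*⟪u, S⟫)
      + (-(a*β*(A2*t))*⟪G, S⟫)
      + (a/2*(q+1-p)*A2*(⟪u, u⟫ + 2*⟪u, S⟫ + ⟪S, S⟫)) := by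
    rw [hzd, hvd, hz, hx', hx]
    simp only [inner_add_left, inner_add_right, inner_sub_left, inner_sub_right,
      inner_neg_left, inner_neg_right, real_inner_smul_left, real_inner_smul_right,
      c1, c2, c3, c4, c5, c6]
    rw [e_q1, e_q, e_qm1, e_qp1, e_p]
    field_simp
    ring
  rw [hexp, real_inner_self_eq_norm_sq u, real_inner_self_eq_norm_sq vt,
    real_inner_self_eq_norm_sq G, real_inner_self_eq_norm_sq S]
  have hcpos2 : 0 < c := hcpos
  have h1q : (0:ℝ) < 1 - q := by linarith
  have e1' : 4*(c+q)^2*(A1*(t*t)) ≤ α*(1-q)*t := by rw [← e_q]; exact e1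
  have e2' : (c+(q+1)/2)*(A1*(t*t)) ≤ α/4*t := by rw [← e_q]; exact e2
  have e3' : c*(A1*(t*t)) ≤ α*t := by rw [← e_q]; exact e3
  have e4' : 8*α*β ≤ d₀*(A1*(t*t)) := by rw [← e_q]; exact e4
  have e4'' : 8*α*β ≤ d*(A1*(t*t)) := by
    have h := mul_le_mul_of_nonneg_right hdd
      (mul_nonneg hA1pos.le (mul_nonneg ht.le ht.le))
    linarith [e4', h]
  have huG0 : 0 ≤ ⟪u, G⟫ := le_trans hγ hγG
  have hXX : 0 ≤ ‖u‖^2 + 2*⟪u, S⟫ + ‖S‖^2 := by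
    have h : (0:ℝ) ≤ ⟪u + S, u + S⟫ := real_inner_self_nonneg
    simp only [inner_add_left, inner_add_right, c3] at h
    have h2 : ⟪u, u⟫ = ‖u‖^2 := real_inner_self_eq_norm_sq u
    have h3 : ⟪S, S⟫ = ‖S‖^2 := real_inner_self_eq_norm_sq S
    linarith
  have hbr : d₀*A2 ≤ d*(A1*t) := mul_le_mul hdd hA2A1 hA2pos.le hd.le
  have g1 := grp1 K₁ q t d dp γ A1 ⟪u, G⟫ c hcdef hq0 ht hd hA1pos hγ hgr hγG hK₁
  have g2 := grp2 α q c A1 t ‖u‖ ‖vt‖ ⟪u, vt⟫ hα h1q hcpos2 (by linarith) hA1pos ht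
    (norm_nonneg u) (norm_nonneg vt) (real_inner_le_norm u vt) e1'
  have g3 := grp3 β c a A1 A2 t ⟪u, G⟫ hβ ha hA1pos hA2pos ht huG0
  have g4 := grp4 α q c A1 t ‖vt‖ hα ht e2'
  have g5 := grp5 α β q c d A1 t ‖vt‖ ‖G‖ ⟪vt, G⟫ hα hβ hcpos2 hd hA1pos ht
    (norm_nonneg vt) (norm_nonneg G) (real_inner_le_norm vt G) e3' e4''
  have g6 := grp6 c a A2 ‖u‖ ‖S‖ ⟪u, S⟫ hcpos2 ha hA2pos (norm_nonneg u) (norm_nonneg S)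
    ((abs_le.mp (abs_real_inner_le_norm u S)).1)
  have g7 := grp7 β a d d₀ A1 A2 t ‖G‖ ‖S‖ ⟪G, S⟫ hβ ha hd hd₀ hdd hA1pos hA2pos ht
    (norm_nonneg G) (norm_nonneg S) ((abs_le.mp (abs_real_inner_le_norm G S)).1) hbr
  have g8 := grp8 a q p A2 (‖u‖^2 + 2*⟪u, S⟫ + ‖S‖^2) ha hp1 hA2pos hXX
  have hslack : 0 ≤ α*t*‖vt‖^2 := by positivity
  linarith only [g1, g2, g3, g4, g5, g6, g7, g8, hslack]

theorem grad_cvx {X : Type*} [NormedAddCommGroup X] [InnerProductSpace ℝ X] [CompleteSpace X]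
    (g : X → ℝ) (g' : X → X) (hgconv : ConvexOn ℝ Set.univ g)
    (hgrad : ∀ u : X, HasGradientAt g (g' u) u) (a b : X) :
    g a + ⟪g' a, b - a⟫ ≤ g b := by
  have hline : HasDerivAt (fun s : ℝ => a + s • (b - a)) (b - a) 0 := by
    simpa using ((hasDerivAt_id (0:ℝ)).smul_const (b - a)).const_add a
  have hcomp : HasDerivAt (fun s : ℝ => g (a + s • (b - a))) ⟪g' a, b - a⟫ 0 := by
    have h0 : HasFDerivAt g ((InnerProductSpace.toDual ℝ X) (g' a)) (a + (0:ℝ) • (b - a)) := by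
      simpa using (hgrad a).hasFDerivAt
    have h1 := h0.comp_hasDerivAt (x := (0:ℝ)) hline
    simpa [InnerProductSpace.toDual_apply_apply, Function.comp_def] using h1
  have hφconv : ConvexOn ℝ Set.univ (fun s : ℝ => g (a + s • (b - a))) := by
    have h2 := hgconv.comp_affineMap (AffineMap.lineMap (k := ℝ) a b)
    have heq : (fun s : ℝ => g (a + s • (b - a))) = g ∘ (AffineMap.lineMap (k := ℝ) a b) := by
      funext s
      simp only [Function.comp_apply, AffineMap.lineMap_apply_module]
      congr 1
      module
    rw [heq]
    simpa using h2
  have hslope := hφconv.le_slope_of_hasDerivAt (Set.mem_univ (0:ℝ)) (Set.mem_univ (1:ℝ))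
    one_pos hcomp
  simp [slope_def_field] at hslope
  linarith [hslope]

set_option maxHeartbeats 2000000 in
/-- part of Theorem 3.2. Assume `q + 1 < p ≤ 2` (with `a ≥ q(1−q)` when
`p = 2`) and the growth condition (b). Then along any solution of (DS), for any minimizer
`x*` of `g`, the trajectory is bounded on `[t0, ∞)`, and as `t → ∞`:
`g(x(t)) − g(x*) = O(1/(δ(t) t^{2q}))` and `‖ẋ(t) + β∇g(x(t))‖ = O(1/t^q)`. -/
theorem DS_bounded_and_rates
    {X : Type*} [NormedAddCommGroup X] [InnerProductSpace ℝ X] [CompleteSpace X]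
    (t0 α β a p q : ℝ) (ht0 : 0 < t0) (hα : 0 < α) (hβ : 0 < β) (ha : 0 < a)
    (hp : 0 < p) (hq0 : 0 < q) (hq1 : q < 1)
    (g : X → ℝ) (g' : X → X)
    (hgconv : ConvexOn ℝ Set.univ g)
    (hgrad : ∀ u : X, HasGradientAt g (g' u) u)
    (δ δ' : ℝ → ℝ)
    (hδpos : ∀ t ∈ Set.Ici t0, 0 < δ t)
    (hδmono : MonotoneOn δ (Set.Ici t0))
    (hδderiv : ∀ t ∈ Set.Ici t0, HasDerivWithinAt δ (δ' t) (Set.Ici t0) t)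
    (hδtop : Tendsto δ atTop atTop)
    (hgrowth : ∃ K₁ > 0, ∃ T ≥ t0, ∀ t ≥ T, t * δ' t < K₁ * δ t)
    (x x' x'' w : ℝ → X)
    (hx : ∀ t ∈ Set.Ici t0, HasDerivWithinAt x (x' t) (Set.Ici t0) t)
    (hx' : ∀ t ∈ Set.Ici t0, HasDerivWithinAt x' (x'' t) (Set.Ici t0) t)
    (hx''cont : ContinuousOn x'' (Set.Ici t0))
    (hw : ∀ t ∈ Set.Ici t0, HasDerivWithinAt (fun s => g' (x s)) (w t) (Set.Ici t0) t)
    (hDS : ∀ t ∈ Set.Ici t0,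
      x'' t + (α / t ^ q) • x' t + β • w t + δ t • g' (x t) + (a / t ^ p) • x t = 0)
    (hp1 : q + 1 < p) (hp2 : p ≤ 2) (hpa : p = 2 → q * (1 - q) ≤ a) :
    ∀ xstar : X, (∀ y : X, g xstar ≤ g y) →
      (∃ M : ℝ, ∀ t ∈ Set.Ici t0, ‖x t‖ ≤ M) ∧
      ((fun t : ℝ => g (x t) - g xstar) =O[atTop] fun t : ℝ => 1 / (δ t * t ^ (2 * q))) ∧
      ((fun t : ℝ => ‖x' t + β • g' (x t)‖) =O[atTop] fun t : ℝ => 1 / t ^ q) := by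
  intro xstar hmin
  obtain ⟨K₁, hK₁, T₀, hT₀, hgr⟩ := hgrowth
  have hd₀ : 0 < δ t0 := hδpos t0 Set.self_mem_Ici
  set c : ℝ := K₁ + q + 1 with hcdef
  have hcpos : 0 < c := by rw [hcdef]; linarith
  have hσpos : 0 < p - q - 1 := by linarith
  set σ : ℝ := p - q - 1 with hσdef
  set J₀ : ℝ := c * a / 2 * ‖xstar‖ ^ 2 + a ^ 2 * β / (2 * δ t0) * ‖xstar‖ ^ 2 with hJdef
  have hJ₀ : 0 ≤ J₀ := by
    have h1 : 0 ≤ c * a / 2 * ‖xstar‖ ^ 2 :=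
      mul_nonneg (div_nonneg (mul_pos hcpos ha).le (by norm_num)) (sq_nonneg _)
    have h2 : 0 ≤ a ^ 2 * β / (2 * δ t0) * ‖xstar‖ ^ 2 := by
      apply mul_nonneg (div_nonneg (by positivity) (by linarith)) (sq_nonneg _)
    rw [hJdef]; linarith
  set G : ℝ → X := fun s => g' (x s) with hGdef
  set v : ℝ → X := fun s => x' s + β • G s with hvdef
  set vd : ℝ → X := fun s => x'' s + β • w s with hvddef
  set z : ℝ → X := fun s => c • (x s - xstar) + s • v s with hzdef
  set zd : ℝ → X := fun s => c • x' s + (s • vd s + v s) with hzddef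
  set E : ℝ → ℝ := fun s => δ s * (s ^ (q+1) * (g (x s) - g xstar))
      + s ^ (q-1) / 2 * ⟪z s, z s⟫
      + α * c / 2 * ⟪x s - xstar, x s - xstar⟫
      + a / 2 * (s ^ (q+1-p) * ⟪x s, x s⟫) with hEdef
  set Ψ : ℝ → ℝ := fun s =>
      (δ' s * (s ^ (q+1) * (g (x s) - g xstar))
        + δ s * ((q+1) * s ^ q * (g (x s) - g xstar) + s ^ (q+1) * ⟪G s, x' s⟫))
      + ((q-1) * s ^ (q-2) / 2 * ⟪z s, z s⟫ + s ^ (q-1) / 2 * (⟪z s, zd s⟫ + ⟪zd s, z s⟫))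
      + α * c / 2 * (⟪x s - xstar, x' s⟫ + ⟪x' s, x s - xstar⟫)
      + a / 2 * ((q+1-p) * s ^ (q-p) * ⟪x s, x s⟫ + s ^ (q+1-p) * (⟪x s, x' s⟫ + ⟪x' s, x s⟫))
      with hΨdef
  -- derivative facts
  have hxD : ∀ t, t0 < t → HasDerivAt x (x' t) t :=
    fun t ht => (hx t (mem_Ici.mpr ht.le)).hasDerivAt (Ici_mem_nhds ht)
  have hx'D : ∀ t, t0 < t → HasDerivAt x' (x'' t) t :=
    fun t ht => (hx' t (mem_Ici.mpr ht.le)).hasDerivAt (Ici_mem_nhds ht)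
  have hGD : ∀ t, t0 < t → HasDerivAt G (w t) t := by
    intro t ht
    rw [hGdef]
    exact (hw t (mem_Ici.mpr ht.le)).hasDerivAt (Ici_mem_nhds ht)
  have hδD : ∀ t, t0 < t → HasDerivAt δ (δ' t) t :=
    fun t ht => (hδderiv t (mem_Ici.mpr ht.le)).hasDerivAt (Ici_mem_nhds ht)
  have hgapD : ∀ t, t0 < t → HasDerivAt (fun s => g (x s)) ⟪G t, x' t⟫ t := by
    intro t ht
    have h0 : HasFDerivAt g ((InnerProductSpace.toDual ℝ X) (g' (x t))) (x t) :=
      (hgrad (x t)).hasFDerivAt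
    have h1 := h0.comp_hasDerivAt t (hxD t ht)
    simpa [hGdef, InnerProductSpace.toDual_apply_apply, Function.comp_def] using h1
  have hvD : ∀ t, t0 < t → HasDerivAt v (vd t) t := by
    intro t ht
    rw [hvdef, hvddef]
    exact (hx'D t ht).add ((hGD t ht).const_smul β)
  have hzD : ∀ t, t0 < t → HasDerivAt z (zd t) t := by
    intro t ht
    rw [hzdef, hzddef]
    have h1 := ((hxD t ht).sub_const xstar).const_smul c
    have h2 := (hasDerivAt_id t).smul (hvD t ht)
    have h3 : HasDerivAt (fun s => c • (x s - xstar) + s • v s)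
        (c • x' t + (t • vd t + (1:ℝ) • v t)) t := h1.add h2
    simpa [one_smul] using h3
  have hpow : ∀ (t r : ℝ), 0 < t → HasDerivAt (fun s : ℝ => s ^ r) (r * t ^ (r-1)) t :=
    fun t r ht => Real.hasDerivAt_rpow_const (Or.inl (ne_of_gt ht))
  have hED : ∀ t, t0 < t → HasDerivAt E (Ψ t) t := by
    intro t ht
    have htpos : 0 < t := lt_trans ht0 ht
    rw [hEdef, hΨdef]
    have hq1' : HasDerivAt (fun s : ℝ => s ^ (q+1)) ((q+1) * t ^ q) t := by
      simpa [show q+1-1 = q by ring] using hpow t (q+1) htpos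
    have hq2' : HasDerivAt (fun s : ℝ => s ^ (q-1)) ((q-1) * t ^ (q-2)) t := by
      simpa [show q-1-1 = q-2 by ring] using hpow t (q-1) htpos
    have hq3' : HasDerivAt (fun s : ℝ => s ^ (q+1-p)) ((q+1-p) * t ^ (q-p)) t := by
      simpa [show q+1-p-1 = q-p by ring] using hpow t (q+1-p) htpos
    have p1 := (hδD t ht).mul (hq1'.mul ((hgapD t ht).sub_const (g xstar)))
    have p2 := (hq2'.div_const 2).mul ((hzD t ht).inner ℝ (hzD t ht))
    have p3 := (((hxD t ht).sub_const xstar).inner ℝ ((hxD t ht).sub_const xstar)).const_mul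
      (α * c / 2)
    have p4 := (hq3'.mul ((hxD t ht).inner ℝ (hxD t ht))).const_mul (a / 2)
    exact ((p1.add p2).add p3).add p4
  -- eventual conditions
  have hevpow : ∀ C C' : ℝ, 0 < C' → ∀ᶠ t : ℝ in atTop, C * t ^ q ≤ C' * t := by
    intro C C' hC'
    have h := (tendsto_rpow_atTop (show (0:ℝ) < 1 - q by linarith)).eventually_ge_atTop (C / C')
    filter_upwards [h, eventually_gt_atTop (0:ℝ)] with t h1 h2
    have h3 : C ≤ C' * t ^ (1-q) := by
      rw [div_le_iff₀ hC'] at h1; linarith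
    have h4 : t ^ (1-q) * t ^ q = t := by
      rw [← Real.rpow_add h2]; norm_num
    calc C * t ^ q ≤ (C' * t ^ (1-q)) * t ^ q :=
          mul_le_mul_of_nonneg_right h3 (Real.rpow_nonneg h2.le q)
      _ = C' * t := by rw [mul_assoc, h4]
  have ev1 := hevpow (4*(c+q)^2) (α*(1-q)) (by nlinarith)
  have ev2 := hevpow (c+(q+1)/2) (α/4) (by linarith)
  have ev3 := hevpow c α hα
  have ev4 : ∀ᶠ t : ℝ in atTop, 8*α*β ≤ δ t0 * t ^ q := by
    have h := (tendsto_rpow_atTop hq0).eventually_ge_atTop (8*α*β / δ t0)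
    filter_upwards [h] with t h1
    rw [div_le_iff₀ hd₀] at h1; linarith
  obtain ⟨T₁, hT₁⟩ := eventually_atTop.mp
    ((((ev1.and ev2).and ev3).and ev4).and ((eventually_ge_atTop (1:ℝ)).and
      (eventually_ge_atTop T₀)))
  set T₂ : ℝ := max T₁ (t0+1) with hT₂def
  have hT₂t0 : t0 < T₂ := lt_of_lt_of_le (by linarith) (le_max_right _ _)
  have hfacts : ∀ t, T₂ ≤ t → (4*(c+q)^2 * t^q ≤ α*(1-q)*t ∧ (c+(q+1)/2)*t^q ≤ α/4*t ∧
      c*t^q ≤ α*t ∧ 8*α*β ≤ δ t0 * t^q ∧ 1 ≤ t ∧ T₀ ≤ t) := by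
    intro t ht
    have h := hT₁ t (le_trans (le_max_left _ _) ht)
    exact ⟨h.1.1.1.1, h.1.1.1.2, h.1.1.2, h.1.2, h.2.1, h.2.2⟩
  -- THE KEY INEQUALITY
  have hkey : ∀ t, T₂ ≤ t → Ψ t ≤ J₀ * t ^ (-σ-1) := by
    intro t ht
    obtain ⟨f1, f2, f3, f4, f5, f6⟩ := hfacts t ht
    have htt0 : t0 ≤ t := le_trans hT₂t0.le ht
    have htpos : 0 < t := lt_of_lt_of_le ht0 htt0
    have hdpos : 0 < δ t := hδpos t (mem_Ici.mpr htt0)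
    have hdd : δ t0 ≤ δ t := hδmono Set.self_mem_Ici (mem_Ici.mpr htt0) htt0
    have hgr' : t * δ' t ≤ K₁ * δ t := (hgr t f6).le
    have hgap : 0 ≤ g (x t) - g xstar := sub_nonneg.mpr (hmin _)
    have hγG : g (x t) - g xstar ≤ ⟪x t - xstar, G t⟫ := by
      have h1 := grad_cvx g g' hgconv hgrad (x t) xstar
      have h2 : xstar - x t = -(x t - xstar) := by abel
      rw [h2, inner_neg_right] at h1
      have h3 : ⟪g' (x t), x t - xstar⟫ = ⟪x t - xstar, G t⟫ := by
        rw [hGdef]; exact real_inner_comm _ _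
      linarith [h1, h3.ge, h3.le]
    have hvd_eq : vd t = -((α / t^q) • x' t + δ t • G t + (a / t^p) • x t) := by
      have h := hDS t (mem_Ici.mpr htt0)
      rw [hvddef, hGdef]
      have h4 : x'' t + β • w t =
          -((α / t^q) • x' t + δ t • g' (x t) + (a / t^p) • x t) := by
        linear_combination (norm := module) h
      exact h4
    have hx'_eq : x' t = v t - β • G t := by
      simp only [hvdef]; abel
    have hx_eq : x t = (x t - xstar) + xstar := by abel
    have hz_eq : z t = c • (x t - xstar) + t • v t := by simp only [hzdef]
    have hzd_eq : zd t = c • x' t + (t • vd t + v t) := by simp only [hzddef]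
    have happ := key_ineq t (δ t) (δ' t) (g (x t) - g xstar) α β a p q c K₁ (δ t0)
        (x t - xstar) (v t) (G t) xstar (x t) (x' t) (vd t) (z t) (zd t)
        hα hβ ha hq0 hq1 hp1 hcdef hK₁ f5 hdpos hd₀ hdd hgr' hgap hγG
        f1 f2 f3 f4 hx_eq hx'_eq hvd_eq hz_eq hzd_eq
    have hΨeq : Ψ t = (δ' t * (t^(q+1) * (g (x t) - g xstar))
        + δ t * ((q+1) * t^q * (g (x t) - g xstar) + t^(q+1) * ⟪G t, x' t⟫))
        + ((q-1) * t^(q-2) / 2 * ⟪z t, z t⟫ + t^(q-1)/2 * (⟪z t, zd t⟫ + ⟪zd t, z t⟫))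
        + α * c / 2 * (⟪x t - xstar, x' t⟫ + ⟪x' t, x t - xstar⟫)
        + a / 2 * ((q+1-p) * t^(q-p) * ⟪x t, x t⟫
          + t^(q+1-p) * (⟪x t, x' t⟫ + ⟪x' t, x t⟫)) := by
      simp only [hΨdef]
    have hJeq : J₀ * t^(-σ-1)
        = (c*a/2*‖xstar‖^2 + a^2*β/(2*δ t0)*‖xstar‖^2) * t^(q-p) := by
      rw [hJdef, show -σ-1 = q-p by rw [hσdef]; ring]
    rw [hΨeq, hJeq]
    exact happ
  -- the Lyapunov function F is nonincreasing on [T₂, ∞)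
  set F : ℝ → ℝ := fun s => E s + J₀/σ * s ^ (-σ) with hFdef
  have hFD : ∀ t, t0 < t → HasDerivAt F (Ψ t + J₀/σ * (-σ * t ^ (-σ-1))) t := by
    intro t ht
    have htpos : 0 < t := lt_trans ht0 ht
    rw [hFdef]
    have hr : HasDerivAt (fun s : ℝ => s ^ (-σ)) (-σ * t ^ (-σ-1)) t := hpow t (-σ) htpos
    exact (hED t ht).add (hr.const_mul (J₀/σ))
  have hanti : AntitoneOn F (Ici T₂) := by
    apply antitoneOn_of_deriv_nonpos (convex_Ici T₂)
    · exact fun s hs => (hFD s (lt_of_lt_of_le hT₂t0 hs)).continuousAt.continuousWithinAt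
    · intro s hs
      rw [interior_Ici] at hs
      exact (hFD s (lt_trans hT₂t0 hs)).differentiableAt.differentiableWithinAt
    · intro s hs
      rw [interior_Ici] at hs
      rw [(hFD s (lt_trans hT₂t0 hs)).deriv]
      have hk := hkey s (le_of_lt hs)
      have hσne : σ ≠ 0 := ne_of_gt hσpos
      have heq : J₀/σ * (-σ * s ^ (-σ-1)) = -(J₀ * s ^ (-σ-1)) := by
        field_simp
      rw [heq]; linarith
  set M₀ : ℝ := F T₂ with hM₀def
  have hEeq : ∀ s : ℝ, E s = δ s * (s ^ (q+1) * (g (x s) - g xstar))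
      + s ^ (q-1) / 2 * ⟪z s, z s⟫
      + α * c / 2 * ⟪x s - xstar, x s - xstar⟫
      + a / 2 * (s ^ (q+1-p) * ⟪x s, x s⟫) := fun s => rfl
  have hFeq : ∀ s : ℝ, F s = E s + J₀/σ * s ^ (-σ) := fun s => rfl
  have hM₀eq : M₀ = E T₂ + J₀/σ * T₂ ^ (-σ) := rfl
  clear_value G v vd z zd E Ψ F M₀ J₀ c σ T₂
  have hM₀b : ∀ t, T₂ ≤ t → E t ≤ M₀ := by
    intro t ht
    have htpos : 0 < t := lt_of_lt_of_le (lt_trans ht0 hT₂t0) ht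
    have h1 : F t ≤ F T₂ := hanti self_mem_Ici (mem_Ici.mpr ht) ht
    have h2 : 0 ≤ J₀/σ * t ^ (-σ) :=
      mul_nonneg (div_nonneg hJ₀ hσpos.le) (Real.rpow_pos_of_pos htpos _).le
    rw [hFeq t, hFeq T₂] at h1
    rw [hM₀eq]
    linarith
  -- extraction of the three conclusions
  have hpieces : ∀ t, T₂ ≤ t →
      δ t * (t^(q+1) * (g (x t) - g xstar)) ≤ M₀ ∧
      ⟪z t, z t⟫ ≤ 2*M₀*t^(1-q) ∧
      ⟪x t - xstar, x t - xstar⟫ ≤ 2*M₀/(α*c) ∧ 0 ≤ M₀ := by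
    intro t ht
    have htpos : 0 < t := lt_of_lt_of_le (lt_trans ht0 hT₂t0) ht
    have htt0 : t0 ≤ t := le_trans hT₂t0.le ht
    have hgap : 0 ≤ g (x t) - g xstar := sub_nonneg.mpr (hmin _)
    have hdpos : 0 < δ t := hδpos t (mem_Ici.mpr htt0)
    have n1 : 0 ≤ δ t * (t^(q+1) * (g (x t) - g xstar)) :=
      mul_nonneg hdpos.le (mul_nonneg (Real.rpow_nonneg htpos.le _) hgap)
    have n2 : 0 ≤ t^(q-1)/2 * ⟪z t, z t⟫ :=
      mul_nonneg (by positivity) real_inner_self_nonneg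
    have n3 : 0 ≤ α*c/2 * ⟪x t - xstar, x t - xstar⟫ :=
      mul_nonneg (le_of_lt (by positivity)) real_inner_self_nonneg
    have n4 : 0 ≤ a/2 * (t^(q+1-p) * ⟪x t, x t⟫) :=
      mul_nonneg (by positivity)
        (mul_nonneg (Real.rpow_nonneg htpos.le _) real_inner_self_nonneg)
    have hEb := hM₀b t ht
    rw [hEeq t] at hEb
    have hM₀nn : 0 ≤ M₀ := by linarith
    refine ⟨by linarith, ?_, ?_, hM₀nn⟩
    · have h5 : t^(q-1)/2 * ⟪z t, z t⟫ ≤ M₀ := by linarith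
      have h6 := mul_le_mul_of_nonneg_right h5 (Real.rpow_nonneg htpos.le (1-q))
      have h7 : t^(q-1) * t^(1-q) = 1 := by
        rw [← Real.rpow_add htpos]; norm_num
      nlinarith [h6, h7, (show (0:ℝ) ≤ ⟪z t, z t⟫ from real_inner_self_nonneg)]
    · have h8 : α*c/2 * ⟪x t - xstar, x t - xstar⟫ ≤ M₀ := by linarith
      rw [le_div_iff₀ (mul_pos hα hcpos)]
      linarith
  have hBDD : ∃ M : ℝ, ∀ t ∈ Set.Ici t0, ‖x t‖ ≤ M := by
    have hxcont : ContinuousOn x (Icc t0 T₂) := fun s hs =>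
      ((hx s (mem_Ici.mpr hs.1)).continuousWithinAt).mono Icc_subset_Ici_self
    obtain ⟨C, hC⟩ := (isCompact_Icc (a := t0) (b := T₂)).exists_bound_of_continuousOn hxcont
    refine ⟨max C (‖xstar‖ + Real.sqrt (2*M₀/(α*c))), fun t htmem => ?_⟩
    rcases le_or_gt t T₂ with hcase | hcase
    · exact le_trans (hC t ⟨htmem, hcase⟩) (le_max_left _ _)
    · have h1 := (hpieces t hcase.le).2.2.1
      have h2 : ‖x t - xstar‖^2 ≤ 2*M₀/(α*c) := by
        rwa [real_inner_self_eq_norm_sq] at h1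
      have h3 : ‖x t - xstar‖ ≤ Real.sqrt (2*M₀/(α*c)) := by
        rw [← Real.sqrt_sq (norm_nonneg (x t - xstar))]
        exact Real.sqrt_le_sqrt h2
      have h4 : ‖x t‖ ≤ ‖xstar‖ + ‖x t - xstar‖ := by
        calc ‖x t‖ = ‖xstar + (x t - xstar)‖ := by rw [add_sub_cancel]
          _ ≤ ‖xstar‖ + ‖x t - xstar‖ := norm_add_le _ _
      exact le_trans (by linarith) (le_max_right _ _)
  refine ⟨hBDD, ?_, ?_⟩
  · -- O-rate for the gap
    rw [isBigO_iff]
    refine ⟨M₀, ?_⟩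
    filter_upwards [eventually_ge_atTop T₂] with t ht
    have htpos : 0 < t := lt_of_lt_of_le (lt_trans ht0 hT₂t0) ht
    have htt0 : t0 ≤ t := le_trans hT₂t0.le ht
    have ht1 : 1 ≤ t := (hfacts t ht).2.2.2.2.1
    have hgap : 0 ≤ g (x t) - g xstar := sub_nonneg.mpr (hmin _)
    have hdpos : 0 < δ t := hδpos t (mem_Ici.mpr htt0)
    have h1 := (hpieces t ht).1
    have hD : 0 < δ t * t^(2*q) := mul_pos hdpos (Real.rpow_pos_of_pos htpos _)
    rw [Real.norm_of_nonneg hgap, Real.norm_of_nonneg (le_of_lt (one_div_pos.mpr hD)),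
      mul_one_div, le_div_iff₀ hD]
    have hcmp : t^(2*q) ≤ t^(q+1) := Real.rpow_le_rpow_of_exponent_le ht1 (by linarith)
    nlinarith [mul_le_mul_of_nonneg_left hcmp (mul_nonneg hdpos.le hgap), h1]
  · -- O-rate for the velocity-type quantity
    rw [isBigO_iff]
    refine ⟨Real.sqrt (4*M₀ + 2*c^2*(2*M₀/(α*c))), ?_⟩
    filter_upwards [eventually_ge_atTop T₂] with t ht
    have htpos : 0 < t := lt_of_lt_of_le (lt_trans ht0 hT₂t0) ht
    have ht1 : 1 ≤ t := (hfacts t ht).2.2.2.2.1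
    have hveq : x' t + β • g' (x t) = v t := by simp only [hvdef, hGdef]
    have hPpos : 0 < t^q := Real.rpow_pos_of_pos htpos q
    rw [hveq, Real.norm_of_nonneg (norm_nonneg _),
      Real.norm_of_nonneg (le_of_lt (one_div_pos.mpr hPpos)), mul_one_div,
      le_div_iff₀ hPpos]
    have hM₀nn : 0 ≤ M₀ := (hpieces t ht).2.2.2
    have hz2 : ‖z t‖^2 ≤ 2*M₀*t^(1-q) := by
      rw [← real_inner_self_eq_norm_sq]; exact (hpieces t ht).2.1
    have hu2 : ‖x t - xstar‖^2 ≤ 2*M₀/(α*c) := by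
      rw [← real_inner_self_eq_norm_sq]; exact (hpieces t ht).2.2.1
    have htv : t • v t = z t - c • (x t - xstar) := by
      simp only [hzdef]; abel
    have htvn : t*‖v t‖ ≤ ‖z t‖ + c*‖x t - xstar‖ := by
      calc t*‖v t‖ = ‖t • v t‖ := by
            rw [norm_smul, Real.norm_of_nonneg htpos.le]
        _ = ‖z t - c • (x t - xstar)‖ := by rw [htv]
        _ ≤ ‖z t‖ + ‖c • (x t - xstar)‖ := norm_sub_le _ _
        _ = ‖z t‖ + c*‖x t - xstar‖ := by
            rw [norm_smul, Real.norm_of_nonneg hcpos.le]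
    have f1 : t^(1-q) * t^q = t := by
      rw [← Real.rpow_add htpos]; norm_num
    have f2 : t^q ≤ t := by
      have := Real.rpow_le_rpow_of_exponent_le ht1 hq1.le
      rwa [Real.rpow_one] at this
    have s1 : (t*‖v t‖)^2 ≤ 2*‖z t‖^2 + 2*(c*‖x t - xstar‖)^2 := by
      have h0 : 0 ≤ t*‖v t‖ := mul_nonneg htpos.le (norm_nonneg _)
      nlinarith [sq_nonneg (‖z t‖ - c*‖x t - xstar‖), htvn, h0,
        mul_nonneg (mul_nonneg hcpos.le (norm_nonneg (x t - xstar))) (norm_nonneg (z t))]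
    have s2 : (t*‖v t‖)^2 ≤ 4*M₀*t^(1-q) + 2*c^2*(2*M₀/(α*c)) := by
      nlinarith [s1, hz2, hu2, mul_le_mul_of_nonneg_left hu2 (by positivity : (0:ℝ) ≤ 2*c^2)]
    have s3 : t^q*t^q*(t*‖v t‖)^2 ≤ (4*M₀*t^(1-q) + 2*c^2*(2*M₀/(α*c)))*(t^q*t^q) := by
      nlinarith [mul_le_mul_of_nonneg_left s2 (mul_nonneg hPpos.le hPpos.le)]
    have s4 : t^(1-q)*(t^q*t^q) ≤ t*t := by
      have e1 : t^(1-q)*(t^q*t^q) = t*t^q := by rw [← mul_assoc, f1]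
      rw [e1]
      exact mul_le_mul_of_nonneg_left f2 htpos.le
    have s5 : t^q*t^q ≤ t*t := by nlinarith [f2, hPpos]
    have s6 : (‖v t‖*t^q)^2*(t*t) ≤ (4*M₀ + 2*c^2*(2*M₀/(α*c)))*(t*t) := by
      have k1 : 0 ≤ 4*M₀ := by linarith
      have k2 : 0 ≤ 2*c^2*(2*M₀/(α*c)) := by positivity
      nlinarith [s3, mul_le_mul_of_nonneg_left s4 k1, mul_le_mul_of_nonneg_left s5 k2]
    have s7 : (‖v t‖*t^q)^2 ≤ 4*M₀ + 2*c^2*(2*M₀/(α*c)) := by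
      nlinarith [s6, mul_pos htpos htpos]
    rw [← Real.sqrt_sq (mul_nonneg (norm_nonneg (v t)) hPpos.le)]
    exact Real.sqrt_le_sqrt s7
end

section
/- Let p > 0, c > 0, a > 0, h > 0 and R ≥ 0. Let (δ_k) be a nondecreasing sequence of positive reals satisfying the growth condition (G) with constant c, set a_k = a(kh)^{−p}, and let (x̄_k) be a sequence in a real Hilbert space X such that ‖x̄_k‖ ≤ R for all k and, for all k, ‖x̄_{k+1} − x̄_k‖ ≤ min{ ((δ_{k+1} a_k)/(δ_k a_{k+1}) − 1) ‖x̄_k‖, (1 − (δ_k a_{k+1})/(δ_{k+1} a_k)) ‖x̄_{k+1}‖ }. Then for all sufficiently large k, ‖x̄_{k+1} − x̄_k‖ ≤ ((1 + c) p / (k − cp)) R. -/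
open Filter Set
open scoped Topology

section KeyIneq
open Real
lemma key_ineq_s18 {p x : ℝ} (hp : 0 < p) (hx : 1 ≤ x) :
    ((x + 1) ^ p - x ^ p) * x ≤ p * (x + 1) ^ p := by
  have hx0 : (0:ℝ) < x := lt_of_lt_of_le one_pos hx
  have hx1 : (0:ℝ) < x + 1 := by linarith
  have hA : (0:ℝ) < x ^ p := rpow_pos_of_pos hx0 p
  have hB : (0:ℝ) < (x + 1) ^ p := rpow_pos_of_pos hx1 p
  have hAB : x ^ p ≤ (x + 1) ^ p := rpow_le_rpow hx0.le (by linarith) hp.le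
  rcases le_or_gt p 1 with hp1 | hp1
  · -- concave case: (1+1/x)^p ≤ 1 + p/x
    have hs : (-1:ℝ) ≤ 1 / x := by
      have h0 : (0:ℝ) ≤ 1 / x := by positivity
      linarith
    have hber := rpow_one_add_le_one_add_mul_self hs hp.le hp1
    have heq : (1 + 1 / x) * x = x + 1 := by field_simp
    have hmul : ((1 + 1 / x) * x) ^ p = (1 + 1 / x) ^ p * x ^ p :=
      mul_rpow (by positivity) hx0.le
    rw [heq] at hmul
    have : (x + 1) ^ p ≤ (1 + p * (1 / x)) * x ^ p := by
      rw [hmul]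
      exact mul_le_mul_of_nonneg_right hber hA.le
    have h1 : (x + 1) ^ p * x ≤ x ^ p * x + p * x ^ p := by
      have := mul_le_mul_of_nonneg_right this hx0.le
      calc (x + 1) ^ p * x ≤ (1 + p * (1 / x)) * x ^ p * x := this
        _ = x ^ p * x + p * x ^ p := by field_simp
    nlinarith
  · -- convex case, Bernoulli with s = -1/(x+1)
    have hs : (-1:ℝ) ≤ -(1 / (x + 1)) := by
      have : 1 / (x + 1) ≤ 1 := by
        rw [div_le_one hx1]; linarith
      linarith
    have hber := one_add_mul_self_le_rpow_one_add hs hp1.le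
    have heq : (1 + -(1 / (x + 1))) = x / (x + 1) := by field_simp; ring
    rw [heq] at hber
    have hdiv : (x / (x + 1)) ^ p = x ^ p / (x + 1) ^ p := div_rpow hx0.le hx1.le p
    rw [hdiv] at hber
    -- 1 - p/(x+1) ≤ x^p / (x+1)^p
    have h1 : (1 - p / (x + 1)) * (x + 1) ^ p ≤ x ^ p := by
      have := mul_le_mul_of_nonneg_right hber hB.le
      calc (1 - p / (x + 1)) * (x + 1) ^ p
          = (1 + p * -(1 / (x + 1))) * (x + 1) ^ p := by ring
        _ ≤ x ^ p / (x + 1) ^ p * (x + 1) ^ p := this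
        _ = x ^ p := by field_simp
    -- so B - A ≤ p*B/(x+1), then (B-A)*x ≤ p*B*x/(x+1) ≤ p*B
    have h2 : ((x + 1) ^ p - x ^ p) * (x + 1) ≤ p * (x + 1) ^ p := by
      have := h1
      have hexp : (1 - p / (x + 1)) * (x + 1) ^ p
          = (x + 1) ^ p - p * (x + 1) ^ p / (x + 1) := by ring
      rw [hexp] at this
      have : (x + 1) ^ p - x ^ p ≤ p * (x + 1) ^ p / (x + 1) := by linarith
      calc ((x + 1) ^ p - x ^ p) * (x + 1) ≤ (p * (x + 1) ^ p / (x + 1)) * (x + 1) :=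
            mul_le_mul_of_nonneg_right this hx1.le
        _ = p * (x + 1) ^ p := by field_simp
    nlinarith
end KeyIneq

/-- Appendix B (iii). Let `p, c, a, h > 0` and `R ≥ 0`. Let `(δ_k)` be a
nondecreasing sequence of positive reals satisfying the growth condition (G) with constant `c`,
set `a_k = a (kh)^{−p}`, and let `(x̄_k)` be a sequence in a real Hilbert space with
`‖x̄_k‖ ≤ R` and `‖x̄_{k+1} − x̄_k‖ ≤ min{ (δ_{k+1}a_k/(δ_k a_{k+1}) − 1)‖x̄_k‖,
(1 − δ_k a_{k+1}/(δ_{k+1} a_k))‖x̄_{k+1}‖ }` for all `k ≥ 1`. Then for all sufficiently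
large `k`, `‖x̄_{k+1} − x̄_k‖ ≤ ((1+c) p/(k − cp)) R`. -/

theorem regularization_path_increment_bound
    {X : Type*} [NormedAddCommGroup X] [InnerProductSpace ℝ X] [CompleteSpace X]
    (p c a h R : ℝ) (hp : 0 < p) (hc : 0 < c) (ha : 0 < a) (hh : 0 < h) (hR : 0 ≤ R)
    (δk : ℕ → ℝ) (hδpos : ∀ k, 0 < δk k) (hδmono : Monotone δk)
    (hG : ∀ k : ℕ, 0 < (1 + c) * (k : ℝ) ^ p - c * ((k : ℝ) + 1) ^ p →
      δk (k + 1) ≤ (k : ℝ) ^ p / ((1 + c) * (k : ℝ) ^ p - c * ((k : ℝ) + 1) ^ p) * δk k)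
    (ak : ℕ → ℝ) (hak : ∀ k : ℕ, ak k = a * ((k : ℝ) * h) ^ (-p))
    (xbar : ℕ → X) (hbound : ∀ k, ‖xbar k‖ ≤ R)
    (hstep : ∀ k : ℕ, 1 ≤ k →
      ‖xbar (k + 1) - xbar k‖ ≤
        min ((δk (k + 1) * ak k / (δk k * ak (k + 1)) - 1) * ‖xbar k‖)
          ((1 - δk k * ak (k + 1) / (δk (k + 1) * ak k)) * ‖xbar (k + 1)‖)) :
    ∀ᶠ k : ℕ in atTop, ‖xbar (k + 1) - xbar k‖ ≤ (1 + c) * p / ((k : ℝ) - c * p) * R := by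
  obtain ⟨N, hN⟩ := exists_nat_gt ((1 + c) * p)
  filter_upwards [eventually_ge_atTop (N + 1)] with k hk
  have hk1 : 1 ≤ k := le_trans (Nat.le_add_left 1 N) hk
  have hkr : (1:ℝ) ≤ (k : ℝ) := by exact_mod_cast hk1
  have hk0 : (0:ℝ) < (k : ℝ) := lt_of_lt_of_le one_pos hkr
  have hkc : (1 + c) * p < (k : ℝ) := by
    calc (1 + c) * p < (N : ℝ) := hN
      _ ≤ (k : ℝ) := by exact_mod_cast le_trans (Nat.le_succ N) hk
  have hkcp : c * p < (k : ℝ) := by nlinarith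
  set A : ℝ := (k : ℝ) ^ p with hAdef
  set B : ℝ := ((k : ℝ) + 1) ^ p with hBdef
  have hA : 0 < A := Real.rpow_pos_of_pos hk0 p
  have hB : 0 < B := Real.rpow_pos_of_pos (by linarith) p
  have hAB : A ≤ B := Real.rpow_le_rpow hk0.le (by linarith) hp.le
  have hkey : (B - A) * (k : ℝ) ≤ p * B := key_ineq_s18 hp hkr
  have hD : 0 < (1 + c) * A - c * B := by
    have h1 : ((1 + c) * A - c * B) * (k : ℝ) = B * (k : ℝ) - (1 + c) * ((B - A) * (k : ℝ)) := by
      ring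
    have h2 : (1 + c) * ((B - A) * (k : ℝ)) ≤ (1 + c) * (p * B) := by
      apply mul_le_mul_of_nonneg_left hkey (by linarith)
    have h3 : (1 + c) * (p * B) < B * (k : ℝ) := by
      have := mul_lt_mul_of_pos_left hkc hB
      nlinarith
    nlinarith
  set D : ℝ := (1 + c) * A - c * B with hDdef
  have hGk := hG k hD
  -- δ(k+1) * D ≤ A * δ k
  have hδD : δk (k + 1) * D ≤ A * δk k := by
    have := mul_le_mul_of_nonneg_right hGk hD.le
    calc δk (k + 1) * D ≤ A / D * δk k * D := this
      _ = A * δk k := by field_simp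
  -- a_k values
  have hcast : ((k + 1 : ℕ) : ℝ) = (k : ℝ) + 1 := by push_cast; ring
  have hakk : ak k = a * (A * h ^ p)⁻¹ := by
    rw [hak k, Real.rpow_neg (by positivity), Real.mul_rpow hk0.le hh.le]
  have hakk1 : ak (k + 1) = a * (B * h ^ p)⁻¹ := by
    rw [hak (k + 1), hcast, Real.rpow_neg (by positivity),
      Real.mul_rpow (by linarith) hh.le]
  have hhp : (0:ℝ) < h ^ p := Real.rpow_pos_of_pos hh p
  have hδk := hδpos k
  have hδk1 := hδpos (k + 1)
  -- ratio identity
  have hratio : δk k * ak (k + 1) / (δk (k + 1) * ak k) = δk k * A / (δk (k + 1) * B) := by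
    rw [hakk, hakk1]
    field_simp
  have hmin := (hstep k hk1).trans (min_le_right _ _)
  rw [hratio] at hmin
  -- 1 - δk*A/(δ(k+1)*B) ≤ (1+c)*(B-A)/B
  have hBD : B - D = (1 + c) * (B - A) := by rw [hDdef]; ring
  have hfrac : D / B ≤ δk k * A / (δk (k + 1) * B) := by
    rw [div_le_div_iff₀ hB (by positivity)]
    calc D * (δk (k + 1) * B) = (δk (k + 1) * D) * B := by ring
      _ ≤ (A * δk k) * B := mul_le_mul_of_nonneg_right hδD hB.le
      _ = δk k * A * B := by ring
  have hfac : 1 - δk k * A / (δk (k + 1) * B) ≤ (1 + c) * (B - A) / B := by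
    have h2 : (1:ℝ) - D / B = (B - D) / B := by field_simp
    have h3 : (1 + c) * (B - A) / B = 1 - D / B := by rw [h2, hBD]
    rw [h3]
    linarith
  have hfac0 : (0:ℝ) ≤ (1 + c) * (B - A) / B :=
    div_nonneg (mul_nonneg (by linarith) (by linarith)) hB.le
  have hstep2 : ‖xbar (k + 1) - xbar k‖ ≤ (1 + c) * (B - A) / B * R := by
    calc ‖xbar (k + 1) - xbar k‖
        ≤ (1 - δk k * A / (δk (k + 1) * B)) * ‖xbar (k + 1)‖ := hmin
      _ ≤ (1 + c) * (B - A) / B * ‖xbar (k + 1)‖ :=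
          mul_le_mul_of_nonneg_right hfac (norm_nonneg _)
      _ ≤ (1 + c) * (B - A) / B * R :=
          mul_le_mul_of_nonneg_left (hbound _) hfac0
  refine hstep2.trans (mul_le_mul_of_nonneg_right ?_ hR)
  -- (1+c)(B-A)/B ≤ (1+c)p/(k - cp)
  rw [div_le_div_iff₀ hB (by linarith)]
  have h1 : (B - A) * ((k : ℝ) - c * p) ≤ (B - A) * (k : ℝ) :=
    mul_le_mul_of_nonneg_left (by nlinarith [mul_pos hc hp]) (by linarith)
  have h2 := mul_le_mul_of_nonneg_left h1 (by linarith : (0:ℝ) ≤ 1 + c)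
  have h3 := mul_le_mul_of_nonneg_left hkey (by linarith : (0:ℝ) ≤ 1 + c)
  calc (1 + c) * (B - A) * ((k : ℝ) - c * p)
      = (1 + c) * ((B - A) * ((k : ℝ) - c * p)) := by ring
    _ ≤ (1 + c) * ((B - A) * (k : ℝ)) := h2
    _ ≤ (1 + c) * (p * B) := h3
    _ = (1 + c) * p * B := by ring
end

section
/- Let 0 < q < 1, q < p ≤ 2, h > 0, λ > 0 and a > 0, and define φ(x) = (λ h^q / 2) (x^q − 2(x+1)^q + (x+2)^q + a h^{2−p} x^{q−p}) for x > 0. Then lim_{x→∞} φ(x)/x^{q−p} = (1/2) a λ h^{q−p+2} if p < 2, and lim_{x→∞} φ(x)/x^{q−p} = (1/2) λ h^q (q(q−1) + a) if p = 2. In particular, if in addition a > q(1 − q) when p = 2, then this limit is positive and φ(x) ≥ 0 for all sufficiently large x. -/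
open Filter Set
open scoped Topology


private lemma hasDerivAt_shift_rpow (x t r : ℝ) (ht : 0 < x + t) :
    HasDerivAt (fun s : ℝ => (x + s) ^ r) (r * (x + t) ^ (r - 1)) t := by
  have h1 := Real.hasDerivAt_rpow_const (x := x + t) (p := r) (Or.inl (ne_of_gt ht))
  have h2 : HasDerivAt (fun s : ℝ => x + s) 1 t := (hasDerivAt_id t).const_add x
  simpa [Function.comp_def] using h1.comp t h2

private lemma secdiff_eq (q x : ℝ) (hx : 0 < x) :
    ∃ ξ ∈ Ioo (0:ℝ) 2,
      x ^ q - 2 * (x + 1) ^ q + (x + 2) ^ q = q * (q - 1) * (x + ξ) ^ (q - 2) := by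
  set F : ℝ → ℝ := fun t => (x + 1 + t) ^ q - (x + t) ^ q with hF
  set F' : ℝ → ℝ := fun t => q * (x + 1 + t) ^ (q - 1) - q * (x + t) ^ (q - 1) with hF'
  have hder : ∀ t ∈ Icc (0:ℝ) 1, HasDerivAt F (F' t) t := by
    intro t ht
    exact (hasDerivAt_shift_rpow (x + 1) t q (by linarith [ht.1])).sub
      (hasDerivAt_shift_rpow x t q (by linarith [ht.1]))
  obtain ⟨θ, hθ, hslope⟩ := exists_hasDerivAt_eq_slope F F' one_pos
    (fun t ht => (hder t ht).continuousAt.continuousWithinAt)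
    (fun t ht => hder t (Ioo_subset_Icc_self ht))
  set G : ℝ → ℝ := fun t => q * (x + t) ^ (q - 1) with hG
  set G' : ℝ → ℝ := fun t => q * ((q - 1) * (x + t) ^ (q - 1 - 1)) with hG'
  have hderG : ∀ t ∈ Icc θ (θ + 1), HasDerivAt G (G' t) t := by
    intro t ht
    exact (hasDerivAt_shift_rpow x t (q - 1) (by nlinarith [ht.1, hθ.1])).const_mul q
  obtain ⟨ξ, hξ, hslopeG⟩ := exists_hasDerivAt_eq_slope G G' (lt_add_one θ)
    (fun t ht => (hderG t ht).continuousAt.continuousWithinAt)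
    (fun t ht => hderG t (Ioo_subset_Icc_self ht))
  refine ⟨ξ, ⟨by linarith [hξ.1, hθ.1], by linarith [hξ.2, hθ.2]⟩, ?_⟩
  have e1 : q - 1 - 1 = q - 2 := by ring
  have h2 : G (θ + 1) - G θ = F' θ := by
    simp only [hG, hF']
    have : x + (θ + 1) = x + 1 + θ := by ring
    rw [this]
  have h3 : F 1 - F 0 = x ^ q - 2 * (x + 1) ^ q + (x + 2) ^ q := by
    simp only [hF]
    have e2 : x + 1 + 1 = x + 2 := by ring
    have e3 : x + (0:ℝ) = x := by ring
    have e4 : x + 1 + (0:ℝ) = x + 1 := by ring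
    rw [e2, e3, e4]; ring
  have : G' ξ = x ^ q - 2 * (x + 1) ^ q + (x + 2) ^ q := by
    rw [hslopeG]
    simp only [add_sub_cancel_left, div_one]
    rw [h2, hslope]
    simp only [sub_zero, div_one]
    exact h3
  rw [← this, hG', e1]; ring

private lemma secdiff_tendsto (q : ℝ) (hq0 : 0 < q) (hq1 : q < 1) :
    Tendsto (fun x : ℝ => (x ^ q - 2 * (x + 1) ^ q + (x + 2) ^ q) / x ^ (q - 2)) atTop
      (𝓝 (q * (q - 1))) := by
  have hneg : q * (q - 1) < 0 := mul_neg_of_pos_of_neg hq0 (by linarith)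
  -- upper bound function tendsto
  have hup : Tendsto (fun x : ℝ => q * (q - 1) * ((x + 2) / x) ^ (q - 2)) atTop
      (𝓝 (q * (q - 1))) := by
    have h1 : Tendsto (fun x : ℝ => (x + 2) / x) atTop (𝓝 1) := by
      have : Tendsto (fun x : ℝ => 1 + 2 / x) atTop (𝓝 (1 + 0)) :=
        tendsto_const_nhds.add (tendsto_const_nhds.div_atTop tendsto_id)
      rw [add_zero] at this
      refine this.congr' ?_
      filter_upwards [eventually_gt_atTop (0:ℝ)] with x hx
      field_simp
    have h2 : Tendsto (fun y : ℝ => y ^ (q - 2)) (𝓝 1) (𝓝 ((1:ℝ) ^ (q - 2))) :=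
      (Real.continuousAt_rpow_const 1 (q - 2) (Or.inl one_ne_zero)).tendsto
    have := (tendsto_const_nhds (x := q * (q - 1))).mul (h2.comp h1)
    simpa using this
  refine tendsto_of_tendsto_of_tendsto_of_le_of_le' tendsto_const_nhds hup ?_ ?_
  · filter_upwards [eventually_gt_atTop (0:ℝ)] with x hx
    obtain ⟨ξ, hξ, heq⟩ := secdiff_eq q x hx
    rw [heq, le_div_iff₀ (Real.rpow_pos_of_pos hx _)]
    have hle : (x + ξ) ^ (q - 2) ≤ x ^ (q - 2) :=
      Real.rpow_le_rpow_of_nonpos hx (by linarith [hξ.1]) (by linarith)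
    nlinarith [hle, hneg]
  · filter_upwards [eventually_gt_atTop (0:ℝ)] with x hx
    obtain ⟨ξ, hξ, heq⟩ := secdiff_eq q x hx
    rw [heq, div_le_iff₀ (Real.rpow_pos_of_pos hx _)]
    have hle : (x + 2) ^ (q - 2) ≤ (x + ξ) ^ (q - 2) :=
      Real.rpow_le_rpow_of_nonpos (by linarith [hξ.1]) (by linarith [hξ.2]) (by linarith)
    have hdr : ((x + 2) / x) ^ (q - 2) = (x + 2) ^ (q - 2) / x ^ (q - 2) :=
      Real.div_rpow (by linarith) (le_of_lt hx) _
    rw [hdr]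
    have hxp : (0:ℝ) < x ^ (q - 2) := Real.rpow_pos_of_pos hx _
    have hA : q * (q - 1) * ((x + 2) ^ (q - 2) / x ^ (q - 2)) * x ^ (q - 2)
        = q * (q - 1) * (x + 2) ^ (q - 2) := by field_simp
    rw [hA]
    nlinarith [hle, hneg]

/-- Appendix A, analysis of the coefficient `n_k = φ(k)`. Let `0 < q < 1`,
`q < p ≤ 2`, `h > 0`, `λ > 0`, `a > 0`, and
`φ(x) = (λ h^q / 2)(x^q − 2(x+1)^q + (x+2)^q + a h^{2−p} x^{q−p})`. Then
`lim_{x→∞} φ(x)/x^{q−p} = (1/2) a λ h^{q−p+2}` if `p < 2`, and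
`lim_{x→∞} φ(x)/x^{q−p} = (1/2) λ h^q (q(q−1) + a)` if `p = 2`; and if additionally
`a > q(1−q)` in the case `p = 2`, this limit is positive and `φ(x) ≥ 0` for all
sufficiently large `x`. -/
theorem phi_limit_and_eventual_nonneg
    (q p h lam a : ℝ) (hq0 : 0 < q) (hq1 : q < 1) (hqp : q < p) (hp2 : p ≤ 2)
    (hh : 0 < h) (hlam : 0 < lam) (ha : 0 < a) :
    (p < 2 →
      Tendsto (fun x : ℝ =>
          (lam * h ^ q / 2) *
            (x ^ q - 2 * (x + 1) ^ q + (x + 2) ^ q + a * h ^ (2 - p) * x ^ (q - p)) /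
          x ^ (q - p))
        atTop (𝓝 (1 / 2 * (a * lam * h ^ (q - p + 2))))) ∧
    (p = 2 →
      Tendsto (fun x : ℝ =>
          (lam * h ^ q / 2) *
            (x ^ q - 2 * (x + 1) ^ q + (x + 2) ^ q + a * h ^ (2 - p) * x ^ (q - p)) /
          x ^ (q - p))
        atTop (𝓝 (1 / 2 * (lam * h ^ q * (q * (q - 1) + a))))) ∧
    ((p = 2 → q * (1 - q) < a) →
      (p < 2 → 0 < 1 / 2 * (a * lam * h ^ (q - p + 2))) ∧
      (p = 2 → 0 < 1 / 2 * (lam * h ^ q * (q * (q - 1) + a))) ∧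
      ∀ᶠ x : ℝ in atTop,
        0 ≤ (lam * h ^ q / 2) *
          (x ^ q - 2 * (x + 1) ^ q + (x + 2) ^ q + a * h ^ (2 - p) * x ^ (q - p))) := by
  have hDq := secdiff_tendsto q hq0 hq1
  set c : ℝ := lam * h ^ q / 2 with hc
  have hcongr : (fun x : ℝ =>
      c * (x ^ q - 2 * (x + 1) ^ q + (x + 2) ^ q + a * h ^ (2 - p) * x ^ (q - p)) /
        x ^ (q - p)) =ᶠ[atTop]
      (fun x : ℝ => c * ((x ^ q - 2 * (x + 1) ^ q + (x + 2) ^ q) / x ^ (q - 2) * x ^ (p - 2)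
        + a * h ^ (2 - p))) := by
    filter_upwards [eventually_gt_atTop (0:ℝ)] with x hx
    have h1 : x ^ (q - p) ≠ 0 := ne_of_gt (Real.rpow_pos_of_pos hx _)
    have h2 : x ^ (q - 2) ≠ 0 := ne_of_gt (Real.rpow_pos_of_pos hx _)
    have e1 : x ^ (q - p) * x ^ (p - 2) = x ^ (q - 2) := by
      rw [← Real.rpow_add hx]; ring_nf
    field_simp
    linear_combination (-(lam * h ^ q / 2 * (x ^ q - 2 * (x + 1) ^ q + (x + 2) ^ q))) * e1
  -- case p < 2
  have t1 : p < 2 →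
      Tendsto (fun x : ℝ =>
          c * (x ^ q - 2 * (x + 1) ^ q + (x + 2) ^ q + a * h ^ (2 - p) * x ^ (q - p)) /
            x ^ (q - p))
        atTop (𝓝 (1 / 2 * (a * lam * h ^ (q - p + 2)))) := by
    intro hplt
    have hxp : Tendsto (fun x : ℝ => x ^ (p - 2)) atTop (𝓝 0) := by
      have := tendsto_rpow_neg_atTop (y := 2 - p) (by linarith)
      simpa [neg_sub] using this
    have hmain : Tendsto (fun x : ℝ =>
        c * ((x ^ q - 2 * (x + 1) ^ q + (x + 2) ^ q) / x ^ (q - 2) * x ^ (p - 2)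
          + a * h ^ (2 - p))) atTop
        (𝓝 (c * (q * (q - 1) * 0 + a * h ^ (2 - p)))) :=
      tendsto_const_nhds.mul ((hDq.mul hxp).add tendsto_const_nhds)
    have hval : c * (q * (q - 1) * 0 + a * h ^ (2 - p)) = 1 / 2 * (a * lam * h ^ (q - p + 2)) := by
      rw [show q - p + 2 = q + (2 - p) by ring, Real.rpow_add hh, hc]; ring
    rw [← hval]
    exact hmain.congr' hcongr.symm
  -- case p = 2
  have t2 : p = 2 →
      Tendsto (fun x : ℝ =>
          c * (x ^ q - 2 * (x + 1) ^ q + (x + 2) ^ q + a * h ^ (2 - p) * x ^ (q - p)) /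
            x ^ (q - p))
        atTop (𝓝 (1 / 2 * (lam * h ^ q * (q * (q - 1) + a)))) := by
    intro hpe
    subst hpe
    have hmain : Tendsto (fun x : ℝ =>
        c * ((x ^ q - 2 * (x + 1) ^ q + (x + 2) ^ q) / x ^ (q - 2) * x ^ ((2:ℝ) - 2)
          + a * h ^ ((2:ℝ) - 2))) atTop
        (𝓝 (c * (q * (q - 1) * 1 + a * 1))) := by
      have e0 : (2:ℝ) - 2 = 0 := by norm_num
      simp only [e0, Real.rpow_zero]
      have hDq1 : Tendsto (fun x : ℝ => (x ^ q - 2 * (x + 1) ^ q + (x + 2) ^ q) / x ^ (q - 2) * 1)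
          atTop (𝓝 (q * (q - 1) * 1)) := hDq.mul tendsto_const_nhds
      exact tendsto_const_nhds.mul (hDq1.add tendsto_const_nhds)
    have hval : c * (q * (q - 1) * 1 + a * 1) = 1 / 2 * (lam * h ^ q * (q * (q - 1) + a)) := by
      rw [hc]; ring
    rw [← hval]
    exact hmain.congr' hcongr.symm
  refine ⟨t1, t2, ?_⟩
  intro hca
  have pos1 : p < 2 → 0 < 1 / 2 * (a * lam * h ^ (q - p + 2)) := by
    intro _
    have := Real.rpow_pos_of_pos hh (q - p + 2)
    positivity
  have pos2 : p = 2 → 0 < 1 / 2 * (lam * h ^ q * (q * (q - 1) + a)) := by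
    intro hpe
    have h1 : 0 < q * (q - 1) + a := by have := hca hpe; nlinarith
    have := Real.rpow_pos_of_pos hh q
    have : 0 < lam * h ^ q * (q * (q - 1) + a) := by positivity
    linarith
  refine ⟨pos1, pos2, ?_⟩
  have hev : ∀ᶠ x : ℝ in atTop,
      0 < c * (x ^ q - 2 * (x + 1) ^ q + (x + 2) ^ q + a * h ^ (2 - p) * x ^ (q - p)) /
        x ^ (q - p) := by
    rcases lt_or_eq_of_le hp2 with hlt | heq
    · exact (t1 hlt).eventually (eventually_gt_nhds (pos1 hlt))
    · exact (t2 heq).eventually (eventually_gt_nhds (pos2 heq))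
  filter_upwards [hev, eventually_gt_atTop (0:ℝ)] with x h1 h2
  have hxp : (0:ℝ) < x ^ (q - p) := Real.rpow_pos_of_pos h2 _
  have := mul_nonneg (le_of_lt h1) (le_of_lt hxp)
  rwa [div_mul_cancel₀ _ (ne_of_gt hxp)] at this
end
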